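/- arXiv:2009.11400 — 2 statements merged into one kernel-verified Lean document; each statement's English description precedes it below -/
import Mathlib

section
/- (Proposition difeq) For each λ₀ ∈ L*, the function θ(τ,ζ) = θ_{λ₀+L}(τ, ζ; v) on ℍ × V_ℂ is holomorphic in ζ for each fixed τ; all the derivatives below exist, and θ satisfies the two heat equations 4πi·∂_τ θ(τ,ζ) = Δ^h_{v₊} θ(τ,ζ) and 4πi·∂_{conj τ} θ(τ,ζ) = Δ^h_{v₋} θ(τ,ζ) for all (τ,ζ) ∈ ℍ × V_ℂ, independently of the bases chosen to define Δ^h_{v₊} and Δ^h_{v₋}. -/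
/-!
Common setup: Jacobi--Siegel theta functions of an even lattice `L` of indefinite
signature, with respect to a Grassmannian element `v = (v₊, v₋)`.

We model the real quadratic space `V` concretely as `ι → ℝ` (`ι` finite), its
complexification `V_ℂ` as `ι → ℂ`, the bilinear form `B` as a plain function
(with bilinearity imposed as a hypothesis), the lattice `L` as a `ℤ`-submodule,
and the projections onto `v₊` and `v₋` as plain functions (with the projection
properties imposed as hypotheses).
-/

noncomputable section

namespace JacobiIndef

/-- `e(w) = exp(2 π i w)`. -/
def eC (w : ℂ) : ℂ := Complex.exp (2 * (Real.pi : ℂ) * Complex.I * w)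

variable {ι : Type*} [Fintype ι]

/-- Inclusion of real vectors into the complexification. -/
def cV (x : ι → ℝ) : ι → ℂ := fun i => (x i : ℂ)

/-- Real part of a complex vector. -/
def reV (z : ι → ℂ) : ι → ℝ := fun i => (z i).re

/-- Imaginary part of a complex vector. -/
def imV (z : ι → ℂ) : ι → ℝ := fun i => (z i).im

/-- The ℂ-linear extension of a real map `p`, acting on complex vectors. -/
def mapC (p : (ι → ℝ) → (ι → ℝ)) (z : ι → ℂ) : ι → ℂ :=
  cV (p (reV z)) + Complex.I • cV (p (imV z))

/-- `B(x, ζ)` for a real vector `x` and a complex vector `ζ` (ℂ-linear in `ζ`). -/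
def pairC (B : (ι → ℝ) → (ι → ℝ) → ℝ) (x : ι → ℝ) (z : ι → ℂ) : ℂ :=
  (B x (reV z) : ℂ) + Complex.I * (B x (imV z) : ℂ)

/-- The ℂ-bilinear extension of `B` to complex vectors. -/
def pairCC (B : (ι → ℝ) → (ι → ℝ) → ℝ) (z w : ι → ℂ) : ℂ :=
  ((B (reV z) (reV w) - B (imV z) (imV w) : ℝ) : ℂ)
    + Complex.I * ((B (reV z) (imV w) + B (imV z) (reV w) : ℝ) : ℂ)

/-- `B` is a symmetric bilinear form on `ι → ℝ`. -/
def IsSymmBilin (B : (ι → ℝ) → (ι → ℝ) → ℝ) : Prop :=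
  (∀ x y z, B (x + y) z = B x z + B y z) ∧
  (∀ (c : ℝ) (x y), B (c • x) y = c * B x y) ∧
  (∀ x y, B x y = B y x)

/-- `B` is nondegenerate. -/
def Nondeg (B : (ι → ℝ) → (ι → ℝ) → ℝ) : Prop :=
  ∀ x, (∀ y, B x y = 0) → x = 0

/-- `pp`, `pm` are the projections of a Grassmannian element: an orthogonal
decomposition `V = v₊ ⊕ v₋` with `B` positive definite on `v₊ = range pp` and
negative definite on `v₋ = range pm`. -/
def IsGrass (B : (ι → ℝ) → (ι → ℝ) → ℝ) (pp pm : (ι → ℝ) → (ι → ℝ)) : Prop :=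
  (∀ x y, pp (x + y) = pp x + pp y) ∧ (∀ (c : ℝ) (x), pp (c • x) = c • pp x) ∧
  (∀ x y, pm (x + y) = pm x + pm y) ∧ (∀ (c : ℝ) (x), pm (c • x) = c • pm x) ∧
  (∀ x, pp x + pm x = x) ∧ (∀ x, pp (pp x) = pp x) ∧ (∀ x, pm (pm x) = pm x) ∧
  (∀ x y, B (pp x) (pm y) = 0) ∧
  (∀ x, pp x ≠ 0 → 0 < B (pp x) (pp x)) ∧
  (∀ x, pm x ≠ 0 → B (pm x) (pm x) < 0)

/-- `L` is a full lattice: the ℤ-span of an ℝ-basis of `V`. -/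
def IsFullLattice (L : Submodule ℤ (ι → ℝ)) : Prop :=
  ∃ b : Module.Basis ι ℝ (ι → ℝ), L = Submodule.span ℤ (Set.range ⇑b)

/-- `L` is even with respect to `B`: integral pairings and even norms. -/
def IsEvenLat (B : (ι → ℝ) → (ι → ℝ) → ℝ) (L : Submodule ℤ (ι → ℝ)) : Prop :=
  (∀ x ∈ L, ∀ y ∈ L, ∃ n : ℤ, B x y = (n : ℝ)) ∧
  (∀ x ∈ L, ∃ n : ℤ, B x x = 2 * (n : ℝ))

/-- The dual lattice `L* = {x | B(x, L) ⊆ ℤ}`, as a set. -/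
def dualSet (B : (ι → ℝ) → (ι → ℝ) → ℝ) (L : Submodule ℤ (ι → ℝ)) : Set (ι → ℝ) :=
  {x | ∀ m ∈ L, ∃ n : ℤ, B x m = (n : ℝ)}

/-- The equivalence relation "congruent modulo `L`" on a set `S` of vectors. -/
def cosetSetoid (L : Submodule ℤ (ι → ℝ)) (S : Set (ι → ℝ)) : Setoid S where
  r x y := (x : ι → ℝ) - (y : ι → ℝ) ∈ L
  iseqv := by
    refine ⟨fun x => by simp, fun {x y} h => ?_, fun {x y z} h1 h2 => ?_⟩
    · have := L.neg_mem h
      simpa [neg_sub] using this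
    · have := L.add_mem h1 h2
      rwa [sub_add_sub_cancel] at this

/-- The set of cosets of `L` in `S` (e.g. `D_L = L*/L`). -/
def DiscT (L : Submodule ℤ (ι → ℝ)) (S : Set (ι → ℝ)) : Type _ :=
  Quotient (cosetSetoid L S)

/-- The discriminant group `D_L = L*/L` (as a type of cosets). -/
def Disc (B : (ι → ℝ) → (ι → ℝ) → ℝ) (L : Submodule ℤ (ι → ℝ)) : Type _ :=
  DiscT L (dualSet B L)

/-- A representative of a coset. -/
def qRep {L : Submodule ℤ (ι → ℝ)} {S : Set (ι → ℝ)} (q : DiscT L S) : ι → ℝ :=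
  (Quotient.out (s := cosetSetoid L S) q).1

/-- The class of an element in a coset space. -/
def mkD {L : Submodule ℤ (ι → ℝ)} {S : Set (ι → ℝ)} (x : ι → ℝ) (hx : x ∈ S) :
    DiscT L S :=
  Quotient.mk (cosetSetoid L S) ⟨x, hx⟩

/-- The Jacobi--Siegel theta component
`θ_{λ₀+L}(τ, ζ; v) = Σ_{λ ∈ λ₀+L} e(τ λ_{v₊}²/2 + τ̄ λ_{v₋}²/2 + B(λ, ζ))`. -/
def theta (B : (ι → ℝ) → (ι → ℝ) → ℝ) (pp pm : (ι → ℝ) → (ι → ℝ))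
    (L : Submodule ℤ (ι → ℝ)) (lam0 : ι → ℝ) (τ : ℂ) (ζ : ι → ℂ) : ℂ :=
  ∑' μ : L, eC (τ * (B (pp (lam0 + (μ : ι → ℝ))) (pp (lam0 + (μ : ι → ℝ))) : ℂ) / 2
    + (starRingEnd ℂ) τ * (B (pm (lam0 + (μ : ι → ℝ))) (pm (lam0 + (μ : ι → ℝ))) : ℂ) / 2
    + pairC B (lam0 + (μ : ι → ℝ)) ζ)

/-- The Jacobi--Siegel theta component with characteristics `(α, β)`. -/
def thetaChar (B : (ι → ℝ) → (ι → ℝ) → ℝ) (pp pm : (ι → ℝ) → (ι → ℝ))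
    (L : Submodule ℤ (ι → ℝ)) (lam0 α β : ι → ℝ) (τ : ℂ) (ζ : ι → ℂ) : ℂ :=
  ∑' μ : L,
    eC (τ * (B (pp (lam0 + (μ : ι → ℝ) + β)) (pp (lam0 + (μ : ι → ℝ) + β)) : ℂ) / 2
      + (starRingEnd ℂ) τ
          * (B (pm (lam0 + (μ : ι → ℝ) + β)) (pm (lam0 + (μ : ι → ℝ) + β)) : ℂ) / 2
      + pairC B (lam0 + (μ : ι → ℝ) + β) ζ
      - (B (lam0 + (μ : ι → ℝ) + (2⁻¹ : ℝ) • β) α : ℂ))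

/-- The normalized theta with characteristics `θ̂ = e(-B(α,β)/2)·θ(·;(α,β);·)`. -/
def thetaHat (B : (ι → ℝ) → (ι → ℝ) → ℝ) (pp pm : (ι → ℝ) → (ι → ℝ))
    (L : Submodule ℤ (ι → ℝ)) (lam0 α β : ι → ℝ) (τ : ℂ) (ζ : ι → ℂ) : ℂ :=
  eC (-(B α β : ℂ) / 2) * thetaChar B pp pm L lam0 α β τ ζ

/-- The elliptic functional equation for index `(L, v)`. -/
def SatElliptic (B : (ι → ℝ) → (ι → ℝ) → ℝ) (pp pm : (ι → ℝ) → (ι → ℝ))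
    (L : Submodule ℤ (ι → ℝ)) (Φ : ℂ → (ι → ℂ) → ℂ) : Prop :=
  ∀ τ : ℂ, 0 < τ.im → ∀ ζ : ι → ℂ, ∀ σ ∈ L, ∀ ν ∈ L,
    Φ τ (ζ + τ • cV (pp σ) + (starRingEnd ℂ) τ • cV (pm σ) + cV ν)
      = eC (-(τ * (B (pp σ) (pp σ) : ℂ) / 2)
            - (starRingEnd ℂ) τ * (B (pm σ) (pm σ) : ℂ) / 2
            - pairC B σ ζ) * Φ τ ζ

/-- The modular functional equation of (doubled) weight `(k2/2, l2/2)` for a matrix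
`A = [[a,b],[c,d]]` with chosen square root `φ` of `j(A, ·)`, and index `(L, v)`. -/
def SatModular (B : (ι → ℝ) → (ι → ℝ) → ℝ) (pp pm : (ι → ℝ) → (ι → ℝ))
    (k2 l2 : ℤ) (a b c d : ℤ) (φ : ℂ → ℂ) (Φ : ℂ → (ι → ℂ) → ℂ) : Prop :=
  ∀ τ : ℂ, 0 < τ.im → ∀ ζ : ι → ℂ,
    Φ (((a : ℂ) * τ + (b : ℂ)) / ((c : ℂ) * τ + (d : ℂ)))
      (((c : ℂ) * τ + (d : ℂ))⁻¹ • mapC pp ζ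
        + ((starRingEnd ℂ) ((c : ℂ) * τ + (d : ℂ)))⁻¹ • mapC pm ζ)
      = φ τ ^ k2 * (starRingEnd ℂ) (φ τ) ^ l2
        * eC ((c : ℂ) * pairCC B (mapC pp ζ) (mapC pp ζ)
                / (2 * ((c : ℂ) * τ + (d : ℂ)))
              + (c : ℂ) * pairCC B (mapC pm ζ) (mapC pm ζ)
                / (2 * (starRingEnd ℂ) ((c : ℂ) * τ + (d : ℂ))))
        * Φ τ ζ

/-- Complex directional derivative in the `ζ` variable, in the direction of a real
vector `w`. -/
def dirDeriv (w : ι → ℝ) (f : (ι → ℂ) → ℂ) (ζ : ι → ℂ) : ℂ :=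
  deriv (fun z : ℂ => f (ζ + z • cV w)) 0

/-- The holomorphic Laplacian `Δ^h` attached to a basis `ws` with `B`-dual basis
`wds`. -/
def lapl {n : ℕ} (ws wds : Fin n → (ι → ℝ)) (f : (ι → ℂ) → ℂ) (ζ : ι → ℂ) : ℂ :=
  ∑ i : Fin n, dirDeriv (ws i) (fun ζ' => dirDeriv (wds i) f ζ') ζ

/-- The Wirtinger derivative `∂_τ = (∂_x - i ∂_y)/2`. -/
def wirtD (g : ℂ → ℂ) (τ : ℂ) : ℂ :=
  (fderiv ℝ g τ 1 - Complex.I * fderiv ℝ g τ Complex.I) / 2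

/-- The Wirtinger derivative `∂_{τ̄} = (∂_x + i ∂_y)/2`. -/
def wirtDBar (g : ℂ → ℂ) (τ : ℂ) : ℂ :=
  (fderiv ℝ g τ 1 + Complex.I * fderiv ℝ g τ Complex.I) / 2

/-- `ws`, `wds` form a basis of the subspace `range p` together with its `B`-dual
basis. -/
def IsDualBasisOf (B : (ι → ℝ) → (ι → ℝ) → ℝ) (p : (ι → ℝ) → (ι → ℝ))
    {n : ℕ} (ws wds : Fin n → (ι → ℝ)) : Prop :=
  (∀ i, p (ws i) = ws i) ∧ (∀ i, p (wds i) = wds i) ∧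
  LinearIndependent ℝ ws ∧
  Submodule.span ℝ (Set.range ws) = Submodule.span ℝ (Set.range p) ∧
  (∀ i j, B (ws i) (wds j) = if i = j then (1 : ℝ) else 0)


set_option linter.unusedSectionVars false
set_option maxHeartbeats 1000000
section AuxAll
open Complex Metric

section SummabilityAux

lemma summable_exp_neg_nat_sq {t : ℝ} (ht : 0 < t) :
    Summable fun n : ℕ => Real.exp (-(t * (n : ℝ) ^ 2)) := by
  have hgeo : Summable fun n : ℕ => Real.exp (-t) ^ n :=
    summable_geometric_of_lt_one (Real.exp_nonneg _)
      (Real.exp_lt_one_iff.2 (neg_lt_zero.2 ht))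
  refine Summable.of_nonneg_of_le (fun n => (Real.exp_pos _).le) (fun n => ?_) hgeo
  rw [← Real.exp_nat_mul]
  apply Real.exp_le_exp.2
  have h1 : (n : ℝ) ≤ (n : ℝ) ^ 2 := by
    rcases Nat.eq_zero_or_pos n with h | h
    · simp [h]
    · have h2 : (1 : ℝ) ≤ (n : ℝ) := by exact_mod_cast h
      nlinarith
  nlinarith

lemma summable_exp_neg_int_sq {t : ℝ} (ht : 0 < t) :
    Summable fun m : ℤ => Real.exp (-(t * (m : ℝ) ^ 2)) := by
  refine Summable.of_nat_of_neg ?_ ?_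
  · simpa using summable_exp_neg_nat_sq ht
  · simpa using summable_exp_neg_nat_sq ht

lemma summable_pi_fin {h : ℤ → ℝ} (h0 : ∀ m, 0 ≤ h m) (hs : Summable h) :
    ∀ n : ℕ, Summable fun v : Fin n → ℤ => ∏ i, h (v i) := by
  intro n
  induction n with
  | zero => exact .of_finite
  | succ n ih =>
    have hprod : Summable fun p : ℤ × (Fin n → ℤ) => h p.1 * ∏ i, h (p.2 i) :=
      Summable.mul_of_nonneg (f := h) (g := fun v : Fin n → ℤ => ∏ i, h (v i)) hs ih
        h0 (fun v => Finset.prod_nonneg fun i _ => h0 _)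
    let e : (ℤ × (Fin n → ℤ)) ≃ (Fin (n + 1) → ℤ) := Fin.consEquiv fun _ => ℤ
    refine (e.summable_iff).1 (hprod.congr fun p => ?_)
    have he : e p = (Fin.cons p.1 p.2 : ∀ _ : Fin (n + 1), ℤ) := rfl
    show h p.1 * ∏ i, h (p.2 i) = ∏ i : Fin (n + 1), h ((e p) i)
    rw [he]
    rw [Fin.prod_univ_succ]
    simp

lemma summable_pi_int {κ : Type*} [Fintype κ] {h : ℤ → ℝ} (h0 : ∀ m, 0 ≤ h m)
    (hs : Summable h) : Summable fun v : κ → ℤ => ∏ i, h (v i) := by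
  classical
  set e := Fintype.equivFin κ with he
  have big := summable_pi_fin h0 hs (Fintype.card κ)
  set E : (κ → ℤ) ≃ (Fin (Fintype.card κ) → ℤ) := Equiv.arrowCongr e (Equiv.refl ℤ) with hE
  refine (E.symm.summable_iff).1 (big.congr fun v => ?_)
  show ∏ j, h (v j) = ∏ i : κ, h (E.symm v i)
  have h1 : ∀ i : κ, E.symm v i = v (e i) := fun i => by
    simp [hE, Equiv.arrowCongr]
  calc ∏ j, h (v j) = ∏ i : κ, h (v (e i)) := (Equiv.prod_comp e fun j => h (v j)).symm
    _ = ∏ i : κ, h (E.symm v i) := by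
        exact Finset.prod_congr rfl fun i _ => by rw [h1 i]

lemma exists_linear_bound {E F : Type*} [NormedAddCommGroup E] [NormedSpace ℝ E]
    [NormedAddCommGroup F] [NormedSpace ℝ F] [FiniteDimensional ℝ E]
    (f : E → F) (hadd : ∀ x y, f (x + y) = f x + f y)
    (hsmul : ∀ (c : ℝ) (x), f (c • x) = c • f x) :
    ∃ C : ℝ, 0 < C ∧ ∀ x, ‖f x‖ ≤ C * ‖x‖ := by
  let g : E →ₗ[ℝ] F := { toFun := f, map_add' := hadd, map_smul' := hsmul }
  let G := LinearMap.toContinuousLinearMap g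
  refine ⟨max ‖G‖ 1, lt_of_lt_of_le one_pos (le_max_right _ _), fun x => ?_⟩
  have hGx : G x = f x := rfl
  rw [← hGx]
  exact le_trans (G.le_opNorm x)
    (mul_le_mul_of_nonneg_right (le_max_left _ _) (norm_nonneg x))

end SummabilityAux

section BilinAux

variable {ι : Type*} [Fintype ι]
variable {B : (ι → ℝ) → (ι → ℝ) → ℝ} {pp pm : (ι → ℝ) → (ι → ℝ)}

lemma B_addr (hB : IsSymmBilin B) (x y z : ι → ℝ) : B x (y + z) = B x y + B x z := by
  rw [hB.2.2 x, hB.1, hB.2.2 y, hB.2.2 z]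

lemma B_smulr (hB : IsSymmBilin B) (c : ℝ) (x y : ι → ℝ) : B x (c • y) = c * B x y := by
  rw [hB.2.2 x, hB.2.1, hB.2.2 y]

lemma B_zeror (hB : IsSymmBilin B) (x : ι → ℝ) : B x 0 = 0 := by
  have h := B_smulr hB 0 x 0
  simpa using h

lemma B_zerol (hB : IsSymmBilin B) (x : ι → ℝ) : B 0 x = 0 := by
  rw [hB.2.2]; exact B_zeror hB x

lemma B_combr (hB : IsSymmBilin B) (x u v : ι → ℝ) (a b : ℝ) :
    B x (a • u + b • v) = a * B x u + b * B x v := by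
  rw [B_addr hB, B_smulr hB, B_smulr hB]

lemma B_suml (hB : IsSymmBilin B) {κ : Type*} (s : Finset κ) (f : κ → (ι → ℝ)) (y : ι → ℝ) :
    B (∑ i ∈ s, f i) y = ∑ i ∈ s, B (f i) y := by
  classical
  induction s using Finset.induction_on with
  | empty => simpa using B_zerol hB y
  | insert _ _ hne ih => rw [Finset.sum_insert hne, Finset.sum_insert hne, hB.1, ih]

lemma B_sumr (hB : IsSymmBilin B) {κ : Type*} (s : Finset κ) (f : κ → (ι → ℝ)) (x : ι → ℝ) :
    B x (∑ i ∈ s, f i) = ∑ i ∈ s, B x (f i) := by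
  rw [hB.2.2, B_suml hB]
  exact Finset.sum_congr rfl fun i _ => hB.2.2 _ _

lemma exists_MB (hB : IsSymmBilin B) :
    ∃ M : ℝ, 0 < M ∧ ∀ x y, |B x y| ≤ M * ‖x‖ * ‖y‖ := by
  have haddr : ∀ x y z, B x (y + z) = B x y + B x z := B_addr hB
  have hsmulr : ∀ (c : ℝ) (x y), B x (c • y) = c * B x y := fun c x y => B_smulr hB c x y
  let g : (ι → ℝ) →ₗ[ℝ] ((ι → ℝ) →ₗ[ℝ] ℝ) :=
    LinearMap.mk₂ ℝ B hB.1 hB.2.1 haddr hsmulr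
  let e : ((ι → ℝ) →ₗ[ℝ] ℝ) →ₗ[ℝ] ((ι → ℝ) →L[ℝ] ℝ) :=
    (LinearMap.toContinuousLinearMap :
      ((ι → ℝ) →ₗ[ℝ] ℝ) ≃ₗ[ℝ] ((ι → ℝ) →L[ℝ] ℝ)).toLinearMap
  let G := LinearMap.toContinuousLinearMap (e.comp g)
  refine ⟨max ‖G‖ 1, lt_of_lt_of_le one_pos (le_max_right _ _), fun x y => ?_⟩
  have h1 : (G x) y = B x y := rfl
  calc |B x y| = ‖(G x) y‖ := by rw [h1, Real.norm_eq_abs]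
    _ ≤ ‖G x‖ * ‖y‖ := (G x).le_opNorm y
    _ ≤ (‖G‖ * ‖x‖) * ‖y‖ :=
        mul_le_mul_of_nonneg_right (G.le_opNorm x) (norm_nonneg y)
    _ ≤ max ‖G‖ 1 * ‖x‖ * ‖y‖ := by
        gcongr
        exact le_max_left _ _

/-- The continuous bilinear extension, for continuity arguments. -/
lemma continuous_Q (hB : IsSymmBilin B) (hG : IsGrass B pp pm) :
    Continuous fun x => B (pp x) (pp x) - B (pm x) (pm x) := by
  have haddr : ∀ x y z, B x (y + z) = B x y + B x z := B_addr hB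
  have hsmulr : ∀ (c : ℝ) (x y), B x (c • y) = c * B x y := fun c x y => B_smulr hB c x y
  let g : (ι → ℝ) →ₗ[ℝ] ((ι → ℝ) →ₗ[ℝ] ℝ) :=
    LinearMap.mk₂ ℝ B hB.1 hB.2.1 haddr hsmulr
  let e : ((ι → ℝ) →ₗ[ℝ] ℝ) →ₗ[ℝ] ((ι → ℝ) →L[ℝ] ℝ) :=
    (LinearMap.toContinuousLinearMap :
      ((ι → ℝ) →ₗ[ℝ] ℝ) ≃ₗ[ℝ] ((ι → ℝ) →L[ℝ] ℝ)).toLinearMap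
  let G := LinearMap.toContinuousLinearMap (e.comp g)
  let P := LinearMap.toContinuousLinearMap
    ({ toFun := pp, map_add' := hG.1, map_smul' := hG.2.1 } : (ι → ℝ) →ₗ[ℝ] (ι → ℝ))
  let Pm := LinearMap.toContinuousLinearMap
    ({ toFun := pm, map_add' := hG.2.2.1, map_smul' := hG.2.2.2.1 } : (ι → ℝ) →ₗ[ℝ] (ι → ℝ))
  have h1 : ∀ x, B (pp x) (pp x) = (G (P x)) (P x) := fun x => rfl
  have h2 : ∀ x, B (pm x) (pm x) = (G (Pm x)) (Pm x) := fun x => rfl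
  simp only [h1, h2]
  exact ((G.continuous.comp P.continuous).clm_apply P.continuous).sub
    ((G.continuous.comp Pm.continuous).clm_apply Pm.continuous)

lemma Q_pos (hB : IsSymmBilin B) (hG : IsGrass B pp pm) {x : ι → ℝ} (hx : x ≠ 0) :
    0 < B (pp x) (pp x) - B (pm x) (pm x) := by
  obtain ⟨hpa, hps, hma, hms, hsum, _, _, horth, hpos, hneg⟩ := hG
  have hA : 0 ≤ B (pp x) (pp x) := by
    rcases eq_or_ne (pp x) 0 with h | h
    · rw [h, B_zerol hB]
    · exact (hpos x h).le
  have hBm : B (pm x) (pm x) ≤ 0 := by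
    rcases eq_or_ne (pm x) 0 with h | h
    · rw [h, B_zerol hB]
    · exact (hneg x h).le
  rcases eq_or_ne (pp x) 0 with h | h
  · have hm : pm x ≠ 0 := fun hc => hx (by rw [← hsum x, h, hc, add_zero])
    have := hneg x hm
    linarith
  · have := hpos x h
    linarith

lemma Q_smul (hB : IsSymmBilin B) (hG : IsGrass B pp pm) (t : ℝ) (x : ι → ℝ) :
    B (pp (t • x)) (pp (t • x)) - B (pm (t • x)) (pm (t • x))
      = t ^ 2 * (B (pp x) (pp x) - B (pm x) (pm x)) := by
  rw [hG.2.1, hG.2.2.2.1, hB.2.1, hB.2.1, B_smulr hB, B_smulr hB]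
  ring

lemma exists_cQ (hB : IsSymmBilin B) (hG : IsGrass B pp pm) :
    ∃ c : ℝ, 0 < c ∧ ∀ x, c * ‖x‖ ^ 2 ≤ B (pp x) (pp x) - B (pm x) (pm x) := by
  have hp0 : pp (0 : ι → ℝ) = 0 := by
    have h := hG.2.1 0 0; simpa using h
  have hm0 : pm (0 : ι → ℝ) = 0 := by
    have h := hG.2.2.2.1 0 0; simpa using h
  have hQ0 : B (pp (0 : ι → ℝ)) (pp (0 : ι → ℝ)) - B (pm 0) (pm 0) = 0 := by
    rw [hp0, hm0, B_zerol hB]; ring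
  rcases isEmpty_or_nonempty ι with hι | hι
  · refine ⟨1, one_pos, fun x => ?_⟩
    have hx0 : x = 0 := Subsingleton.elim x 0
    rw [hx0, hQ0]
    simp
  · haveI := hι
    obtain ⟨z, hz, hmin⟩ := (isCompact_sphere (0 : ι → ℝ) 1).exists_isMinOn
      (NormedSpace.sphere_nonempty.2 zero_le_one)
      ((continuous_Q hB hG).continuousOn)
    have hz1 : ‖z‖ = 1 := by simpa using hz
    have hzne : z ≠ 0 := fun h => by simp [h] at hz1
    refine ⟨_, Q_pos hB hG hzne, fun x => ?_⟩
    rcases eq_or_ne x 0 with rfl | hx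
    · rw [hQ0]; simp
    · set u := ‖x‖⁻¹ • x with hu_def
      have hxn : ‖x‖ ≠ 0 := norm_ne_zero_iff.2 hx
      have hu : ‖u‖ = 1 := by
        rw [hu_def, norm_smul, norm_inv, norm_norm, inv_mul_cancel₀ hxn]
      have hxu : x = ‖x‖ • u := by
        rw [hu_def, smul_smul, mul_inv_cancel₀ hxn, one_smul]
      have humem : u ∈ sphere (0 : ι → ℝ) 1 := by simpa using hu
      have hle := hmin humem
      have hQx : B (pp x) (pp x) - B (pm x) (pm x)
          = ‖x‖ ^ 2 * (B (pp u) (pp u) - B (pm u) (pm u)) := by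
        conv_lhs => rw [hxu]
        exact Q_smul hB hG _ _
      rw [hQx]
      have : B (pp z) (pp z) - B (pm z) (pm z) ≤ B (pp u) (pp u) - B (pm u) (pm u) := hle
      nlinarith [sq_nonneg ‖x‖]

end BilinAux

section LatticeAux

variable {ι : Type*} [Fintype ι]
variable {B : (ι → ℝ) → (ι → ℝ) → ℝ} {pp pm : (ι → ℝ) → (ι → ℝ)}
variable {L : Submodule ℤ (ι → ℝ)}

lemma summable_master (hL : IsFullLattice L) (x0 : ι → ℝ) {s : ℝ} (hs : 0 < s) (r : ℝ) :
    Summable fun μ : L =>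
      Real.exp (-(s * ‖x0 + (μ : ι → ℝ)‖ ^ 2) + r * ‖x0 + (μ : ι → ℝ)‖) := by
  classical
  obtain ⟨b, hb⟩ := hL
  rcases isEmpty_or_nonempty ι with hι | hι
  · haveI : Subsingleton (ι → ℝ) := ⟨fun a b => funext fun i => (hι.elim i)⟩
    haveI : Finite ↥L := Finite.of_subsingleton
    exact .of_finite
  · haveI := hι
    set d := Fintype.card ι with hd
    have hd1 : 0 < d := Fintype.card_pos
    -- basis of L over ℤ
    have hb' : Submodule.span ℤ (Set.range ⇑b) = L := hb.symm
    let bz : Module.Basis ι ℤ L := (b.restrictScalars ℤ).map (LinearEquiv.ofEq _ _ hb')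
    let E : L ≃ₗ[ℤ] (ι → ℤ) := bz.equivFun
    -- T : coordinates to vector
    let T : (ι → ℝ) ≃ₗ[ℝ] (ι → ℝ) := b.equivFun.symm
    have hcoord : ∀ μ : L, (μ : ι → ℝ) = T fun i => ((E μ i : ℝ)) := by
      intro μ
      have h1 : ∑ i, E μ i • bz i = μ := bz.sum_equivFun μ
      have h2 := congrArg (Submodule.subtype L) h1
      rw [map_sum] at h2
      have h3 : ∀ i, (Submodule.subtype L) (E μ i • bz i) = (E μ i : ℝ) • b i := by
        intro i
        rw [map_zsmul]
        have h4 : ((bz i : L) : ι → ℝ) = b i := by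
          simp [bz, Module.Basis.map_apply, Module.Basis.restrictScalars_apply]
        simp only [Submodule.subtype_apply, h4]
        rw [← Int.cast_smul_eq_zsmul ℝ]
      rw [Module.Basis.equivFun_symm_apply]
      have h2' : (μ : ι → ℝ) = ∑ x : ι, L.subtype (E μ x • bz x) := h2.symm
      rw [h2']
      exact Finset.sum_congr rfl fun i _ => h3 i
    -- lower bound for T
    obtain ⟨C, hC, hCb⟩ := exists_linear_bound (fun x => b.equivFun x)
      (fun x y => map_add b.equivFun x y) (fun c x => map_smul b.equivFun c x)
    have hTlow : ∀ y : ι → ℝ, C⁻¹ * ‖y‖ ≤ ‖T y‖ := by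
      intro y
      have h1 : ‖b.equivFun (T y)‖ ≤ C * ‖T y‖ := hCb _
      have h2 : b.equivFun (T y) = y := b.equivFun.apply_symm_apply y
      rw [h2] at h1
      rw [inv_mul_le_iff₀ hC] at *
      · linarith [h1]
    set c2 : ℝ := C⁻¹ with hc2
    have hc2p : 0 < c2 := inv_pos.2 hC
    -- reduce to sum over ι → ℤ
    rw [← (E.toEquiv.symm.summable_iff
      (f := fun μ : L => Real.exp (-(s * ‖x0 + (μ : ι → ℝ)‖ ^ 2) + r * ‖x0 + (μ : ι → ℝ)‖)))]
    set t : ℝ := s * c2 ^ 2 / 4 with ht_def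
    have ht : 0 < t := by positivity
    have htd : 0 < t / d := by positivity
    set K : ℝ := Real.exp (r ^ 2 / (2 * s) + s / 2 * ‖x0‖ ^ 2) with hK
    refine Summable.of_nonneg_of_le (fun n => (Real.exp_pos _).le) (fun n => ?_)
      (((summable_pi_int (fun m => (Real.exp_pos _).le)
        (summable_exp_neg_int_sq htd)).mul_left K))
    -- pointwise bound
    set y : ι → ℝ := fun i => ((E.toEquiv.symm n : L) : ι → ℝ) i with hy
    show Real.exp (-(s * ‖x0 + ((E.toEquiv.symm n : L) : ι → ℝ)‖ ^ 2)
        + r * ‖x0 + ((E.toEquiv.symm n : L) : ι → ℝ)‖)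
      ≤ K * ∏ i, Real.exp (-(t / d * (n i : ℝ) ^ 2))
    have hyn : ((E.toEquiv.symm n : L) : ι → ℝ) = T fun i => ((n i : ℝ)) := by
      rw [hcoord (E.toEquiv.symm n)]
      congr 1
      funext i
      congr 1
      exact congrArg (fun v => v i) (E.apply_symm_apply n)
    rw [hyn]
    set yv : ι → ℝ := fun i => ((n i : ℝ)) with hyv
    set u : ℝ := ‖x0 + T yv‖ with hu
    set v : ℝ := ‖yv‖ with hv
    set w : ℝ := ‖x0‖ with hw
    have hu0 : 0 ≤ u := norm_nonneg _
    have hv0 : 0 ≤ v := norm_nonneg _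
    have hw0 : 0 ≤ w := norm_nonneg _
    have hulow : c2 * v - w ≤ u := by
      have h1' : T yv = (x0 + T yv) - x0 := by abel
      have h1 : ‖T yv‖ ≤ u + w := by
        calc ‖T yv‖ = ‖(x0 + T yv) - x0‖ := by rw [add_sub_cancel_left]
          _ ≤ ‖x0 + T yv‖ + ‖x0‖ := norm_sub_le _ _
      have h2 := hTlow yv
      rw [← hv] at h2
      linarith
    have hstep1 : -(s * u ^ 2) + r * u ≤ -(s / 2 * u ^ 2) + r ^ 2 / (2 * s) := by
      have h := sq_nonneg (s * u - r)
      have hs2 : (0:ℝ) < 2 * s := by linarith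
      have hdiv : -(s * u ^ 2) + r * u - (-(s / 2 * u ^ 2)) ≤ r ^ 2 / (2 * s) := by
        rw [le_div_iff₀ hs2]
        nlinarith
      linarith
    have hstep2 : c2 ^ 2 * v ^ 2 / 2 - w ^ 2 ≤ u ^ 2 := by
      nlinarith [sq_nonneg (u - w), mul_nonneg (by linarith : (0:ℝ) ≤ u + w - c2 * v)
        (by positivity : (0:ℝ) ≤ u + w + c2 * v)]
    have hexp : -(s * u ^ 2) + r * u
        ≤ (r ^ 2 / (2 * s) + s / 2 * w ^ 2) + (-(t * v ^ 2)) := by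
      have h3 : -(s / 2 * u ^ 2) ≤ -(s / 2) * (c2 ^ 2 * v ^ 2 / 2 - w ^ 2) := by
        nlinarith
      have h4 : -(s / 2) * (c2 ^ 2 * v ^ 2 / 2 - w ^ 2)
          = -(t * v ^ 2) + s / 2 * w ^ 2 := by
        rw [ht_def]; ring
      linarith
    have hsum_sq : t * v ^ 2 ≥ t / d * ∑ i, (n i : ℝ) ^ 2 := by
      have h5 : ∑ i, (n i : ℝ) ^ 2 ≤ (d : ℝ) * v ^ 2 := by
        have h6 : ∀ i : ι, (n i : ℝ) ^ 2 ≤ v ^ 2 := by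
          intro i
          have h7 : |(n i : ℝ)| ≤ v := by
            have := norm_le_pi_norm yv i
            simpa [hyv, Real.norm_eq_abs] using this
          nlinarith [abs_nonneg ((n i : ℝ)), le_abs_self ((n i : ℝ)), neg_abs_le ((n i : ℝ))]
        calc ∑ i, (n i : ℝ) ^ 2 ≤ ∑ _i : ι, v ^ 2 := Finset.sum_le_sum fun i _ => h6 i
          _ = (d : ℝ) * v ^ 2 := by rw [Finset.sum_const, hd]; simp [mul_comm]
      have h8 : 0 < (d : ℝ) := by exact_mod_cast hd1
      rw [ge_iff_le, div_mul_eq_mul_div, div_le_iff₀ h8]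
      nlinarith
    calc Real.exp (-(s * u ^ 2) + r * u)
        ≤ Real.exp ((r ^ 2 / (2 * s) + s / 2 * w ^ 2) + (-(t / d * ∑ i, (n i : ℝ) ^ 2))) := by
          apply Real.exp_le_exp.2
          linarith
      _ = K * Real.exp (∑ i, -(t / d * (n i : ℝ) ^ 2)) := by
          rw [Real.exp_add, hK]
          congr 2
          rw [Finset.mul_sum, ← Finset.sum_neg_distrib]
      _ = K * ∏ i, Real.exp (-(t / d * (n i : ℝ) ^ 2)) := by rw [Real.exp_sum]

lemma summable_key (hB : IsSymmBilin B) (hG : IsGrass B pp pm) (hL : IsFullLattice L)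
    (x0 : ι → ℝ) (k : ℕ) {t : ℝ} (ht : 0 < t) (r : ℝ) :
    Summable fun μ : L => (1 + ‖x0 + (μ : ι → ℝ)‖) ^ k *
      Real.exp (-(t * (B (pp (x0 + (μ : ι → ℝ))) (pp (x0 + (μ : ι → ℝ)))
          - B (pm (x0 + (μ : ι → ℝ))) (pm (x0 + (μ : ι → ℝ)))))
        + r * ‖x0 + (μ : ι → ℝ)‖) := by
  obtain ⟨c, hc, hcQ⟩ := exists_cQ hB hG
  refine Summable.of_nonneg_of_le (fun μ => by positivity) (fun μ => ?_)
    (summable_master hL x0 (mul_pos ht hc) (r + k))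
  set x : ℝ := ‖x0 + (μ : ι → ℝ)‖ with hx
  have hx0 : (0:ℝ) ≤ x := norm_nonneg _
  have h1 : (1 + x) ^ k ≤ Real.exp (k * x) := by
    calc (1 + x) ^ k ≤ (Real.exp x) ^ k := by
          apply pow_le_pow_left₀ (by positivity)
          linarith [Real.add_one_le_exp x]
      _ = Real.exp (k * x) := by rw [← Real.exp_nat_mul]
  have hQ := hcQ (x0 + (μ : ι → ℝ))
  calc (1 + x) ^ k * Real.exp (-(t * (B (pp (x0 + (μ : ι → ℝ))) (pp (x0 + (μ : ι → ℝ)))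
          - B (pm (x0 + (μ : ι → ℝ))) (pm (x0 + (μ : ι → ℝ))))) + r * x)
      ≤ Real.exp (k * x) * Real.exp (-(t * (B (pp (x0 + (μ : ι → ℝ))) (pp (x0 + (μ : ι → ℝ)))
          - B (pm (x0 + (μ : ι → ℝ))) (pm (x0 + (μ : ι → ℝ))))) + r * x) :=
        mul_le_mul_of_nonneg_right h1 (Real.exp_nonneg _)
    _ = Real.exp (k * x + (-(t * (B (pp (x0 + (μ : ι → ℝ))) (pp (x0 + (μ : ι → ℝ)))
          - B (pm (x0 + (μ : ι → ℝ))) (pm (x0 + (μ : ι → ℝ))))) + r * x)) :=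
        (Real.exp_add _ _).symm
    _ ≤ Real.exp (-(t * c * x ^ 2) + (r + k) * x) := by
        apply Real.exp_le_exp.2
        have h2 : t * (c * x ^ 2) ≤ t * (B (pp (x0 + (μ : ι → ℝ))) (pp (x0 + (μ : ι → ℝ)))
          - B (pm (x0 + (μ : ι → ℝ))) (pm (x0 + (μ : ι → ℝ)))) :=
          mul_le_mul_of_nonneg_left hQ ht.le
        nlinarith
    _ = Real.exp (-(t * c * x ^ 2) + (r + ↑k) * x) := rfl

end LatticeAux

section ComplexAux

variable {ι : Type*} [Fintype ι]
variable {B : (ι → ℝ) → (ι → ℝ) → ℝ} {pp pm : (ι → ℝ) → (ι → ℝ)}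
variable {L : Submodule ℤ (ι → ℝ)}

lemma norm_eC (w : ℂ) : ‖eC w‖ = Real.exp (-(2 * Real.pi * w.im)) := by
  rw [eC, Complex.norm_exp]
  congr 1
  simp [Complex.mul_re, Complex.mul_im]

lemma norm_reV_le (ζ : ι → ℂ) : ‖reV ζ‖ ≤ ‖ζ‖ := by
  refine (pi_norm_le_iff_of_nonneg (norm_nonneg ζ)).2 fun i => ?_
  calc ‖reV ζ i‖ = |(ζ i).re| := by rw [Real.norm_eq_abs]; rfl
    _ ≤ ‖ζ i‖ := Complex.abs_re_le_norm _
    _ ≤ ‖ζ‖ := norm_le_pi_norm ζ i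

lemma norm_imV_le (ζ : ι → ℂ) : ‖imV ζ‖ ≤ ‖ζ‖ := by
  refine (pi_norm_le_iff_of_nonneg (norm_nonneg ζ)).2 fun i => ?_
  calc ‖imV ζ i‖ = |(ζ i).im| := by rw [Real.norm_eq_abs]; rfl
    _ ≤ ‖ζ i‖ := Complex.abs_im_le_norm _
    _ ≤ ‖ζ‖ := norm_le_pi_norm ζ i

lemma pairC_im (x : ι → ℝ) (ζ : ι → ℂ) : (pairC B x ζ).im = B x (imV ζ) := by
  simp [pairC]

lemma pairC_cV (hB : IsSymmBilin B) (x w : ι → ℝ) : pairC B x (cV w) = (B x w : ℂ) := by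
  have h1 : reV (cV w) = w := funext fun i => by simp [reV, cV]
  have h2 : imV (cV w) = 0 := funext fun i => by simp [imV, cV]
  simp [pairC, h1, h2, B_zeror hB]

lemma norm_pairC_le {M : ℝ} (hM : ∀ a y, |B a y| ≤ M * ‖a‖ * ‖y‖) (hM0 : 0 ≤ M)
    (x : ι → ℝ) (ζ : ι → ℂ) : ‖pairC B x ζ‖ ≤ 2 * M * ‖x‖ * ‖ζ‖ := by
  have h0 : (0:ℝ) ≤ M * ‖x‖ := by positivity
  calc ‖pairC B x ζ‖
      ≤ ‖((B x (reV ζ) : ℝ) : ℂ)‖ + ‖Complex.I * ((B x (imV ζ) : ℝ) : ℂ)‖ := norm_add_le _ _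
    _ = |B x (reV ζ)| + |B x (imV ζ)| := by
        simp [Complex.norm_real]
    _ ≤ M * ‖x‖ * ‖reV ζ‖ + M * ‖x‖ * ‖imV ζ‖ := add_le_add (hM _ _) (hM _ _)
    _ ≤ M * ‖x‖ * ‖ζ‖ + M * ‖x‖ * ‖ζ‖ := add_le_add
        (mul_le_mul_of_nonneg_left (norm_reV_le ζ) h0)
        (mul_le_mul_of_nonneg_left (norm_imV_le ζ) h0)
    _ = 2 * M * ‖x‖ * ‖ζ‖ := by ring

/-- `pairC B x` as a continuous `ℂ`-linear map. -/
def pairCLM (hB : IsSymmBilin B) (x : ι → ℝ) : (ι → ℂ) →L[ℂ] ℂ :=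
  LinearMap.toContinuousLinearMap
    { toFun := pairC B x
      map_add' := fun z w => by
        have hre : reV (z + w) = reV z + reV w := funext fun i => by
          simp [reV]
        have him : imV (z + w) = imV z + imV w := funext fun i => by
          simp [imV]
        simp only [pairC, hre, him, hB.2.2 x, hB.1]
        push_cast
        ring
      map_smul' := fun c z => by
        have hre : reV (c • z) = c.re • reV z + (-c.im) • imV z := funext fun i => by
          simp [reV, imV, Complex.mul_re]
          ring
        have him : imV (c • z) = c.im • reV z + c.re • imV z := funext fun i => by
          simp [reV, imV, Complex.mul_im]
          ring
        simp only [pairC, hre, him, B_combr hB, RingHom.id_apply, smul_eq_mul]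
        apply Complex.ext <;>
          simp [Complex.mul_re, Complex.mul_im] <;> ring }

@[simp] lemma pairCLM_apply (hB : IsSymmBilin B) (x : ι → ℝ) (ζ : ι → ℂ) :
    pairCLM hB x ζ = pairC B x ζ := rfl

lemma pairCLM_norm_le (hB : IsSymmBilin B) {M : ℝ} (hM : ∀ a y, |B a y| ≤ M * ‖a‖ * ‖y‖)
    (hM0 : 0 ≤ M) (x : ι → ℝ) : ‖pairCLM hB x‖ ≤ 2 * M * ‖x‖ := by
  refine ContinuousLinearMap.opNorm_le_bound _ (by positivity) fun ζ => ?_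
  rw [pairCLM_apply]
  exact norm_pairC_le hM hM0 x ζ

/-- A single term of the theta series. -/
def termF (B : (ι → ℝ) → (ι → ℝ) → ℝ) (pp pm : (ι → ℝ) → (ι → ℝ))
    (L : Submodule ℤ (ι → ℝ)) (lam0 : ι → ℝ) (μ : L) (τ : ℂ) (ζ : ι → ℂ) : ℂ :=
  eC (τ * (B (pp (lam0 + (μ : ι → ℝ))) (pp (lam0 + (μ : ι → ℝ))) : ℂ) / 2
    + (starRingEnd ℂ) τ * (B (pm (lam0 + (μ : ι → ℝ))) (pm (lam0 + (μ : ι → ℝ))) : ℂ) / 2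
    + pairC B (lam0 + (μ : ι → ℝ)) ζ)

lemma theta_eq (lam0 : ι → ℝ) (τ : ℂ) (ζ : ι → ℂ) :
    theta B pp pm L lam0 τ ζ = ∑' μ : L, termF B pp pm L lam0 μ τ ζ := rfl

lemma im_arg (a b : ℝ) (τ : ℂ) (x : ι → ℝ) (ζ : ι → ℂ) :
    (τ * (a : ℂ) / 2 + (starRingEnd ℂ) τ * (b : ℂ) / 2 + pairC B x ζ).im
      = τ.im * (a - b) / 2 + B x (imV ζ) := by
  have h1 : τ * (a : ℂ) / 2 = ((a / 2 : ℝ) : ℂ) * τ := by push_cast; ring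
  have h2 : (starRingEnd ℂ) τ * (b : ℂ) / 2 = ((b / 2 : ℝ) : ℂ) * (starRingEnd ℂ) τ := by
    push_cast; ring
  rw [Complex.add_im, Complex.add_im, h1, h2, pairC_im]
  simp [Complex.mul_im, Complex.conj_im, Complex.conj_re]
  ring

lemma norm_termF (lam0 : ι → ℝ) (μ : L) (τ : ℂ) (ζ : ι → ℂ) :
    ‖termF B pp pm L lam0 μ τ ζ‖
      = Real.exp (-(Real.pi * (τ.im * (B (pp (lam0 + (μ : ι → ℝ))) (pp (lam0 + (μ : ι → ℝ)))
            - B (pm (lam0 + (μ : ι → ℝ))) (pm (lam0 + (μ : ι → ℝ))))))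
          - 2 * Real.pi * B (lam0 + (μ : ι → ℝ)) (imV ζ)) := by
  rw [termF, norm_eC, im_arg]
  congr 1
  ring

lemma norm_termF_le (hB : IsSymmBilin B) (hG : IsGrass B pp pm)
    {M : ℝ} (hM : ∀ a y, |B a y| ≤ M * ‖a‖ * ‖y‖) (hM0 : 0 ≤ M)
    (lam0 : ι → ℝ) (μ : L) {τ' : ℂ} {y0 K : ℝ} (hy0 : 0 < y0) (hy : y0 ≤ τ'.im)
    (ζ' : ι → ℂ) (hK : ‖imV ζ'‖ ≤ K) :
    ‖termF B pp pm L lam0 μ τ' ζ'‖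
      ≤ Real.exp (-(Real.pi * y0 * (B (pp (lam0 + (μ : ι → ℝ))) (pp (lam0 + (μ : ι → ℝ)))
            - B (pm (lam0 + (μ : ι → ℝ))) (pm (lam0 + (μ : ι → ℝ)))))
          + 2 * Real.pi * M * K * ‖lam0 + (μ : ι → ℝ)‖) := by
  obtain ⟨c, hc, hcQ⟩ := exists_cQ hB hG
  set l : ι → ℝ := lam0 + (μ : ι → ℝ) with hl
  have hQ0 : 0 ≤ B (pp l) (pp l) - B (pm l) (pm l) := by
    have := hcQ l
    nlinarith [sq_nonneg ‖l‖]
  rw [norm_termF]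
  apply Real.exp_le_exp.2
  have hpi := Real.pi_pos
  have f1 : Real.pi * y0 * (B (pp l) (pp l) - B (pm l) (pm l))
      ≤ Real.pi * τ'.im * (B (pp l) (pp l) - B (pm l) (pm l)) :=
    mul_le_mul_of_nonneg_right (mul_le_mul_of_nonneg_left hy hpi.le) hQ0
  have f2 : -(B l (imV ζ')) ≤ M * ‖l‖ * K := by
    have h1 := hM l (imV ζ')
    have h2 : M * ‖l‖ * ‖imV ζ'‖ ≤ M * ‖l‖ * K :=
      mul_le_mul_of_nonneg_left hK (by positivity)
    have h3 := neg_abs_le (B l (imV ζ'))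
    linarith [abs_nonneg (B l (imV ζ'))]
  have f3 : 2 * Real.pi * (-(B l (imV ζ'))) ≤ 2 * Real.pi * (M * ‖l‖ * K) :=
    mul_le_mul_of_nonneg_left f2 (by positivity)
  nlinarith [f1, f3]

end ComplexAux

section DerivZ

variable {ι : Type*} [Fintype ι]
variable {B : (ι → ℝ) → (ι → ℝ) → ℝ} {pp pm : (ι → ℝ) → (ι → ℝ)}
variable {L : Submodule ℤ (ι → ℝ)}

lemma zMain (hB : IsSymmBilin B) (hG : IsGrass B pp pm) (hL : IsFullLattice L)
    (lam0 : ι → ℝ) {τ : ℂ} (hτ : 0 < τ.im)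
    (P : L → ℂ) (CP : ℝ) (k : ℕ)
    (hP : ∀ μ : L, ‖P μ‖ ≤ CP * (1 + ‖lam0 + (μ : ι → ℝ)‖) ^ k) :
    (∀ ζ : ι → ℂ, Summable fun μ : L => P μ * termF B pp pm L lam0 μ τ ζ) ∧
    (∀ ζ : ι → ℂ, Summable fun μ : L => (P μ * termF B pp pm L lam0 μ τ ζ) •
        ((2 * (Real.pi : ℂ) * Complex.I) • pairCLM hB (lam0 + (μ : ι → ℝ)))) ∧
    (∀ ζ : ι → ℂ, HasFDerivAt (fun ζ' : ι → ℂ => ∑' μ : L, P μ * termF B pp pm L lam0 μ τ ζ')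
        (∑' μ : L, (P μ * termF B pp pm L lam0 μ τ ζ) •
          ((2 * (Real.pi : ℂ) * Complex.I) • pairCLM hB (lam0 + (μ : ι → ℝ)))) ζ) := by
  obtain ⟨M, hMp, hM⟩ := exists_MB hB
  have hM0 : (0:ℝ) ≤ M := hMp.le
  have hCP : 0 ≤ CP := by
    have h1 := hP 0
    have h2 : (0:ℝ) < (1 + ‖lam0 + ((0 : L) : ι → ℝ)‖) ^ k := by positivity
    nlinarith [norm_nonneg (P 0)]
  have hpi := Real.pi_pos
  -- pointwise norm bound for a term
  have hbound1 : ∀ (K : ℝ), 0 ≤ K → ∀ (μ : L) (ζ' : ι → ℂ), ‖imV ζ'‖ ≤ K →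
      ‖P μ * termF B pp pm L lam0 μ τ ζ'‖
        ≤ CP * ((1 + ‖lam0 + (μ : ι → ℝ)‖) ^ k *
            Real.exp (-(Real.pi * τ.im *
                (B (pp (lam0 + (μ : ι → ℝ))) (pp (lam0 + (μ : ι → ℝ)))
                  - B (pm (lam0 + (μ : ι → ℝ))) (pm (lam0 + (μ : ι → ℝ)))))
              + 2 * Real.pi * M * K * ‖lam0 + (μ : ι → ℝ)‖)) := by
    intro K hK0 μ ζ' hζ'
    calc ‖P μ * termF B pp pm L lam0 μ τ ζ'‖
        = ‖P μ‖ * ‖termF B pp pm L lam0 μ τ ζ'‖ := norm_mul _ _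
      _ ≤ (CP * (1 + ‖lam0 + (μ : ι → ℝ)‖) ^ k) *
          Real.exp (-(Real.pi * τ.im *
              (B (pp (lam0 + (μ : ι → ℝ))) (pp (lam0 + (μ : ι → ℝ)))
                - B (pm (lam0 + (μ : ι → ℝ))) (pm (lam0 + (μ : ι → ℝ)))))
            + 2 * Real.pi * M * K * ‖lam0 + (μ : ι → ℝ)‖) :=
          mul_le_mul (hP μ) (norm_termF_le hB hG hM hM0 lam0 μ hτ le_rfl ζ' hζ')
            (norm_nonneg _) (by positivity)
      _ = _ := by ring
  -- summability of the term series
  have hsum : ∀ ζ : ι → ℂ, Summable fun μ : L => P μ * termF B pp pm L lam0 μ τ ζ := by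
    intro ζ
    refine Summable.of_norm_bounded
      (((summable_key hB hG hL lam0 k (mul_pos hpi hτ)
          (2 * Real.pi * M * ‖imV ζ‖)).mul_left CP))
      (fun μ => ?_)
    have := hbound1 ‖imV ζ‖ (norm_nonneg _) μ ζ le_rfl
    calc ‖P μ * termF B pp pm L lam0 μ τ ζ‖ ≤ _ := this
      _ = CP * ((1 + ‖lam0 + (μ : ι → ℝ)‖) ^ k *
            Real.exp (-(Real.pi * τ.im *
                (B (pp (lam0 + (μ : ι → ℝ))) (pp (lam0 + (μ : ι → ℝ)))
                  - B (pm (lam0 + (μ : ι → ℝ))) (pm (lam0 + (μ : ι → ℝ)))))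
              + 2 * Real.pi * M * ‖imV ζ‖ * ‖lam0 + (μ : ι → ℝ)‖)) := rfl
  -- norm bound for the derivative terms
  have hbound2 : ∀ (K : ℝ), 0 ≤ K → ∀ (μ : L) (ζ' : ι → ℂ), ‖imV ζ'‖ ≤ K →
      ‖(P μ * termF B pp pm L lam0 μ τ ζ') •
          ((2 * (Real.pi : ℂ) * Complex.I) • pairCLM hB (lam0 + (μ : ι → ℝ)))‖
        ≤ (CP * (4 * Real.pi * M)) * ((1 + ‖lam0 + (μ : ι → ℝ)‖) ^ (k + 1) *
            Real.exp (-(Real.pi * τ.im *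
                (B (pp (lam0 + (μ : ι → ℝ))) (pp (lam0 + (μ : ι → ℝ)))
                  - B (pm (lam0 + (μ : ι → ℝ))) (pm (lam0 + (μ : ι → ℝ)))))
              + 2 * Real.pi * M * K * ‖lam0 + (μ : ι → ℝ)‖)) := by
    intro K hK0 μ ζ' hζ'
    have hop : ‖(P μ * termF B pp pm L lam0 μ τ ζ') •
        ((2 * (Real.pi : ℂ) * Complex.I) • pairCLM hB (lam0 + (μ : ι → ℝ)))‖
        ≤ ‖P μ * termF B pp pm L lam0 μ τ ζ'‖ * (2 * Real.pi) *
          (2 * M * ‖lam0 + (μ : ι → ℝ)‖) := by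
      refine ContinuousLinearMap.opNorm_le_bound _ (by positivity) fun v => ?_
      have happ : ((P μ * termF B pp pm L lam0 μ τ ζ') •
          ((2 * (Real.pi : ℂ) * Complex.I) • pairCLM hB (lam0 + (μ : ι → ℝ)))) v
          = (P μ * termF B pp pm L lam0 μ τ ζ') *
            ((2 * (Real.pi : ℂ) * Complex.I) * pairC B (lam0 + (μ : ι → ℝ)) v) := by
        simp [smul_eq_mul, mul_assoc]
      rw [happ]
      have h1 : ‖2 * (Real.pi : ℂ) * Complex.I‖ = 2 * Real.pi := by
        simp [norm_mul, Complex.norm_real, Real.norm_eq_abs, abs_of_pos hpi]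
      have e1 : ‖P μ * termF B pp pm L lam0 μ τ ζ' *
          (2 * (Real.pi : ℂ) * Complex.I * pairC B (lam0 + (μ : ι → ℝ)) v)‖
          = ‖P μ * termF B pp pm L lam0 μ τ ζ'‖ *
            ‖2 * (Real.pi : ℂ) * Complex.I * pairC B (lam0 + (μ : ι → ℝ)) v‖ := norm_mul _ _
      have e2 : ‖2 * (Real.pi : ℂ) * Complex.I * pairC B (lam0 + (μ : ι → ℝ)) v‖
          = 2 * Real.pi * ‖pairC B (lam0 + (μ : ι → ℝ)) v‖ := by rw [norm_mul, h1]
      rw [e1, e2]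
      have h2 := norm_pairC_le hM hM0 (lam0 + (μ : ι → ℝ)) v
      have e3 := mul_le_mul_of_nonneg_left h2
        (by positivity : (0:ℝ) ≤ ‖P μ * termF B pp pm L lam0 μ τ ζ'‖ * (2 * Real.pi))
      nlinarith [e3]
    calc ‖(P μ * termF B pp pm L lam0 μ τ ζ') •
          ((2 * (Real.pi : ℂ) * Complex.I) • pairCLM hB (lam0 + (μ : ι → ℝ)))‖
        ≤ ‖P μ * termF B pp pm L lam0 μ τ ζ'‖ * (2 * Real.pi) *
          (2 * M * ‖lam0 + (μ : ι → ℝ)‖) := hop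
      _ ≤ (CP * ((1 + ‖lam0 + (μ : ι → ℝ)‖) ^ k *
            Real.exp (-(Real.pi * τ.im *
                (B (pp (lam0 + (μ : ι → ℝ))) (pp (lam0 + (μ : ι → ℝ)))
                  - B (pm (lam0 + (μ : ι → ℝ))) (pm (lam0 + (μ : ι → ℝ)))))
              + 2 * Real.pi * M * K * ‖lam0 + (μ : ι → ℝ)‖))) * (2 * Real.pi) *
          (2 * M * (1 + ‖lam0 + (μ : ι → ℝ)‖)) := by
          gcongr
          · exact hbound1 K hK0 μ ζ' hζ'
          · linarith [norm_nonneg (lam0 + (μ : ι → ℝ))]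
      _ = (CP * (4 * Real.pi * M)) * ((1 + ‖lam0 + (μ : ι → ℝ)‖) ^ (k + 1) *
            Real.exp (-(Real.pi * τ.im *
                (B (pp (lam0 + (μ : ι → ℝ))) (pp (lam0 + (μ : ι → ℝ)))
                  - B (pm (lam0 + (μ : ι → ℝ))) (pm (lam0 + (μ : ι → ℝ)))))
              + 2 * Real.pi * M * K * ‖lam0 + (μ : ι → ℝ)‖)) := by
          rw [pow_succ]
          ring
  have hsumU : ∀ (K : ℝ), Summable fun μ : L =>
      (CP * (4 * Real.pi * M)) * ((1 + ‖lam0 + (μ : ι → ℝ)‖) ^ (k + 1) *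
        Real.exp (-(Real.pi * τ.im *
            (B (pp (lam0 + (μ : ι → ℝ))) (pp (lam0 + (μ : ι → ℝ)))
              - B (pm (lam0 + (μ : ι → ℝ))) (pm (lam0 + (μ : ι → ℝ)))))
          + 2 * Real.pi * M * K * ‖lam0 + (μ : ι → ℝ)‖)) := fun K =>
    (summable_key hB hG hL lam0 (k + 1) (mul_pos hpi hτ)
      (2 * Real.pi * M * K)).mul_left _
  -- summability of the derivative series
  have hsumD : ∀ ζ : ι → ℂ, Summable fun μ : L => (P μ * termF B pp pm L lam0 μ τ ζ) •
      ((2 * (Real.pi : ℂ) * Complex.I) • pairCLM hB (lam0 + (μ : ι → ℝ))) := by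
    intro ζ
    exact Summable.of_norm_bounded (hsumU ‖imV ζ‖)
      (fun μ => hbound2 ‖imV ζ‖ (norm_nonneg _) μ ζ le_rfl)
  -- per-term derivative
  have hterm : ∀ (μ : L) (ζ' : ι → ℂ),
      HasFDerivAt (fun ζ'' : ι → ℂ => P μ * termF B pp pm L lam0 μ τ ζ'')
        ((P μ * termF B pp pm L lam0 μ τ ζ') •
          ((2 * (Real.pi : ℂ) * Complex.I) • pairCLM hB (lam0 + (μ : ι → ℝ)))) ζ' := by
    intro μ ζ'
    set c : ℂ := τ * (B (pp (lam0 + (μ : ι → ℝ))) (pp (lam0 + (μ : ι → ℝ))) : ℂ) / 2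
      + (starRingEnd ℂ) τ * (B (pm (lam0 + (μ : ι → ℝ))) (pm (lam0 + (μ : ι → ℝ))) : ℂ) / 2
      with hc
    set D : (ι → ℂ) →L[ℂ] ℂ :=
      (2 * (Real.pi : ℂ) * Complex.I) • pairCLM hB (lam0 + (μ : ι → ℝ)) with hD
    have hfun : ∀ ζ'' : ι → ℂ, termF B pp pm L lam0 μ τ ζ''
        = Complex.exp (2 * (Real.pi : ℂ) * Complex.I * c + D ζ'') := by
      intro ζ''
      rw [termF, eC]
      congr 1
      rw [hD]
      simp only [ContinuousLinearMap.coe_smul', Pi.smul_apply, pairCLM_apply, smul_eq_mul, hc]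
      ring
    have h1 : HasFDerivAt (fun ζ'' : ι → ℂ => 2 * (Real.pi : ℂ) * Complex.I * c + D ζ'') D ζ' :=
      (D.hasFDerivAt).const_add _
    have h2 := (h1.cexp).const_mul (P μ)
    have h3 : (fun ζ'' : ι → ℂ => P μ * termF B pp pm L lam0 μ τ ζ'')
        = fun ζ'' : ι → ℂ => P μ * Complex.exp (2 * (Real.pi : ℂ) * Complex.I * c + D ζ'') := by
      funext ζ''
      rw [hfun]
    rw [h3]
    refine h2.congr_fderiv ?_
    rw [hfun ζ', hD]
    exact smul_smul _ _ _
  refine ⟨hsum, hsumD, fun ζ => ?_⟩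
  have hball : ∀ ζ' ∈ Metric.ball ζ 1, ‖imV ζ'‖ ≤ ‖ζ‖ + 1 := by
    intro ζ' hζ'
    have h1 : ‖ζ' - ζ‖ < 1 := by
      rw [← dist_eq_norm]
      exact Metric.mem_ball.1 hζ'
    have h2 := norm_sub_norm_le ζ' ζ
    have h3 := norm_imV_le ζ'
    linarith
  exact hasFDerivAt_tsum_of_isPreconnected (hsumU (‖ζ‖ + 1)) Metric.isOpen_ball
    (convex_ball ζ 1).isPreconnected
    (fun μ ζ' _ => hterm μ ζ')
    (fun μ ζ' hζ' => hbound2 (‖ζ‖ + 1) (by positivity) μ ζ' (hball ζ' hζ'))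
    (Metric.mem_ball_self one_pos) (hsum ζ) (Metric.mem_ball_self one_pos)

lemma dirDeriv_tsum (hB : IsSymmBilin B) (hG : IsGrass B pp pm) (hL : IsFullLattice L)
    (lam0 : ι → ℝ) {τ : ℂ} (hτ : 0 < τ.im)
    (P : L → ℂ) (CP : ℝ) (k : ℕ)
    (hP : ∀ μ : L, ‖P μ‖ ≤ CP * (1 + ‖lam0 + (μ : ι → ℝ)‖) ^ k)
    (w : ι → ℝ) (ζ : ι → ℂ) :
    dirDeriv w (fun ζ' : ι → ℂ => ∑' μ : L, P μ * termF B pp pm L lam0 μ τ ζ') ζ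
      = ∑' μ : L, (P μ * (2 * (Real.pi : ℂ) * Complex.I * (B (lam0 + (μ : ι → ℝ)) w : ℂ)))
          * termF B pp pm L lam0 μ τ ζ := by
  obtain ⟨hsum, hsumD, hder⟩ := zMain hB hG hL lam0 hτ P CP k hP
  have hpath : HasDerivAt (fun z : ℂ => ζ + z • cV w) (cV w) 0 := by
    have h1 : HasDerivAt (fun z : ℂ => z • cV w) ((1 : ℂ) • cV w) 0 :=
      (hasDerivAt_id (0 : ℂ)).smul_const (cV w)
    simpa using h1.const_add ζ
  have h0 : ζ + (0 : ℂ) • cV w = ζ := by simp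
  have hl : HasFDerivAt (fun ζ' : ι → ℂ => ∑' μ : L, P μ * termF B pp pm L lam0 μ τ ζ')
      (∑' μ : L, (P μ * termF B pp pm L lam0 μ τ ζ) •
        ((2 * (Real.pi : ℂ) * Complex.I) • pairCLM hB (lam0 + (μ : ι → ℝ))))
      (ζ + (0 : ℂ) • cV w) := by
    rw [h0]
    exact hder ζ
  have hcomp := hl.comp_hasDerivAt 0 hpath
  have hval : dirDeriv w (fun ζ' : ι → ℂ => ∑' μ : L, P μ * termF B pp pm L lam0 μ τ ζ') ζ
      = (∑' μ : L, (P μ * termF B pp pm L lam0 μ τ ζ) •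
          ((2 * (Real.pi : ℂ) * Complex.I) • pairCLM hB (lam0 + (μ : ι → ℝ)))) (cV w) := by
    rw [dirDeriv]
    exact hcomp.deriv
  rw [hval]
  have heq : (∑' μ : L, (P μ * termF B pp pm L lam0 μ τ ζ) •
      ((2 * (Real.pi : ℂ) * Complex.I) • pairCLM hB (lam0 + (μ : ι → ℝ)))) (cV w)
      = (ContinuousLinearMap.apply ℂ ℂ (cV w)) (∑' μ : L, (P μ * termF B pp pm L lam0 μ τ ζ) •
        ((2 * (Real.pi : ℂ) * Complex.I) • pairCLM hB (lam0 + (μ : ι → ℝ)))) := rfl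
  rw [heq, (ContinuousLinearMap.apply ℂ ℂ (cV w)).map_tsum (hsumD ζ)]
  refine tsum_congr fun μ => ?_
  have happ : ((P μ * termF B pp pm L lam0 μ τ ζ) •
      ((2 * (Real.pi : ℂ) * Complex.I) • pairCLM hB (lam0 + (μ : ι → ℝ)))) (cV w)
      = (P μ * termF B pp pm L lam0 μ τ ζ) *
        (2 * (Real.pi : ℂ) * Complex.I * pairC B (lam0 + (μ : ι → ℝ)) (cV w)) := by
    simp [smul_eq_mul, mul_assoc]
  calc (ContinuousLinearMap.apply ℂ ℂ (cV w))
        ((P μ * termF B pp pm L lam0 μ τ ζ) •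
          ((2 * (Real.pi : ℂ) * Complex.I) • pairCLM hB (lam0 + (μ : ι → ℝ))))
      = (P μ * termF B pp pm L lam0 μ τ ζ) *
        (2 * (Real.pi : ℂ) * Complex.I * pairC B (lam0 + (μ : ι → ℝ)) (cV w)) := happ
    _ = (P μ * (2 * (Real.pi : ℂ) * Complex.I * (B (lam0 + (μ : ι → ℝ)) w : ℂ)))
        * termF B pp pm L lam0 μ τ ζ := by
        rw [pairC_cV hB]
        ring

/-- The real-linear derivative of a theta term with respect to `τ`. -/
def gCLM (B : (ι → ℝ) → (ι → ℝ) → ℝ) (pp pm : (ι → ℝ) → (ι → ℝ))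
    (L : Submodule ℤ (ι → ℝ)) (lam0 : ι → ℝ) (μ : L) : ℂ →L[ℝ] ℂ :=
  ((Real.pi : ℂ) * Complex.I * (B (pp (lam0 + (μ : ι → ℝ))) (pp (lam0 + (μ : ι → ℝ))) : ℂ)) •
      (ContinuousLinearMap.id ℝ ℂ)
    + ((Real.pi : ℂ) * Complex.I * (B (pm (lam0 + (μ : ι → ℝ))) (pm (lam0 + (μ : ι → ℝ))) : ℂ)) •
      (Complex.conjCLE : ℂ ≃L[ℝ] ℂ).toContinuousLinearMap

lemma gCLM_apply (lam0 : ι → ℝ) (μ : L) (v : ℂ) :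
    gCLM B pp pm L lam0 μ v
      = (Real.pi : ℂ) * Complex.I * (B (pp (lam0 + (μ : ι → ℝ))) (pp (lam0 + (μ : ι → ℝ))) : ℂ) * v
        + (Real.pi : ℂ) * Complex.I
          * (B (pm (lam0 + (μ : ι → ℝ))) (pm (lam0 + (μ : ι → ℝ))) : ℂ) * ((starRingEnd ℂ) v) := by
  simp [gCLM, smul_eq_mul, mul_assoc]

lemma tMain (hB : IsSymmBilin B) (hG : IsGrass B pp pm) (hL : IsFullLattice L)
    (lam0 : ι → ℝ) {τ : ℂ} (hτ : 0 < τ.im)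
    (P : L → ℂ) (CP : ℝ) (k : ℕ)
    (hP : ∀ μ : L, ‖P μ‖ ≤ CP * (1 + ‖lam0 + (μ : ι → ℝ)‖) ^ k) (ζ : ι → ℂ) :
    (Summable fun μ : L => (P μ * termF B pp pm L lam0 μ τ ζ) • gCLM B pp pm L lam0 μ) ∧
    HasFDerivAt (fun τ' : ℂ => ∑' μ : L, P μ * termF B pp pm L lam0 μ τ' ζ)
      (∑' μ : L, (P μ * termF B pp pm L lam0 μ τ ζ) • gCLM B pp pm L lam0 μ) τ := by
  obtain ⟨M, hMp, hM⟩ := exists_MB hB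
  have hM0 : (0:ℝ) ≤ M := hMp.le
  obtain ⟨Cp, hCpp, hCp⟩ := exists_linear_bound pp hG.1 hG.2.1
  obtain ⟨Cm, hCmp, hCm⟩ := exists_linear_bound pm hG.2.2.1 hG.2.2.2.1
  have hCP : 0 ≤ CP := by
    have h1 := hP 0
    have h2 : (0:ℝ) < (1 + ‖lam0 + ((0 : L) : ι → ℝ)‖) ^ k := by positivity
    nlinarith [norm_nonneg (P 0)]
  have hpi := Real.pi_pos
  -- operator norm bound on gCLM
  have hgb : ∀ μ : L, ‖gCLM B pp pm L lam0 μ‖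
      ≤ Real.pi * M * (Cp ^ 2 + Cm ^ 2) * (1 + ‖lam0 + (μ : ι → ℝ)‖) ^ 2 := by
    intro μ
    refine ContinuousLinearMap.opNorm_le_bound _ (by positivity) fun v => ?_
    rw [gCLM_apply]
    have hA : |B (pp (lam0 + (μ : ι → ℝ))) (pp (lam0 + (μ : ι → ℝ)))|
        ≤ M * Cp ^ 2 * ‖lam0 + (μ : ι → ℝ)‖ ^ 2 := by
      have h1 := hM (pp (lam0 + (μ : ι → ℝ))) (pp (lam0 + (μ : ι → ℝ)))
      have h2 := hCp (lam0 + (μ : ι → ℝ))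
      have h3 : ‖pp (lam0 + (μ : ι → ℝ))‖ * ‖pp (lam0 + (μ : ι → ℝ))‖
          ≤ (Cp * ‖lam0 + (μ : ι → ℝ)‖) * (Cp * ‖lam0 + (μ : ι → ℝ)‖) :=
        mul_le_mul h2 h2 (norm_nonneg _) (by positivity)
      have h4 := mul_le_mul_of_nonneg_left h3 hM0
      nlinarith [h1, h4]
    have hBm : |B (pm (lam0 + (μ : ι → ℝ))) (pm (lam0 + (μ : ι → ℝ)))|
        ≤ M * Cm ^ 2 * ‖lam0 + (μ : ι → ℝ)‖ ^ 2 := by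
      have h1 := hM (pm (lam0 + (μ : ι → ℝ))) (pm (lam0 + (μ : ι → ℝ)))
      have h2 := hCm (lam0 + (μ : ι → ℝ))
      have h3 : ‖pm (lam0 + (μ : ι → ℝ))‖ * ‖pm (lam0 + (μ : ι → ℝ))‖
          ≤ (Cm * ‖lam0 + (μ : ι → ℝ)‖) * (Cm * ‖lam0 + (μ : ι → ℝ)‖) :=
        mul_le_mul h2 h2 (norm_nonneg _) (by positivity)
      have h4 := mul_le_mul_of_nonneg_left h3 hM0
      nlinarith [h1, h4]
    have hx2 : ‖lam0 + (μ : ι → ℝ)‖ ^ 2 ≤ (1 + ‖lam0 + (μ : ι → ℝ)‖) ^ 2 := by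
      nlinarith [norm_nonneg (lam0 + (μ : ι → ℝ))]
    have e1 : ‖(Real.pi : ℂ) * Complex.I
        * (B (pp (lam0 + (μ : ι → ℝ))) (pp (lam0 + (μ : ι → ℝ))) : ℂ) * v‖
        = Real.pi * |B (pp (lam0 + (μ : ι → ℝ))) (pp (lam0 + (μ : ι → ℝ)))| * ‖v‖ := by
      simp [norm_mul, Complex.norm_real, Real.norm_eq_abs, abs_of_pos hpi]
    have e2 : ‖(Real.pi : ℂ) * Complex.I
        * (B (pm (lam0 + (μ : ι → ℝ))) (pm (lam0 + (μ : ι → ℝ))) : ℂ) * ((starRingEnd ℂ) v)‖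
        = Real.pi * |B (pm (lam0 + (μ : ι → ℝ))) (pm (lam0 + (μ : ι → ℝ)))| * ‖v‖ := by
      simp [norm_mul, Complex.norm_real, Real.norm_eq_abs, abs_of_pos hpi]
    calc ‖(Real.pi : ℂ) * Complex.I
          * (B (pp (lam0 + (μ : ι → ℝ))) (pp (lam0 + (μ : ι → ℝ))) : ℂ) * v
        + (Real.pi : ℂ) * Complex.I
          * (B (pm (lam0 + (μ : ι → ℝ))) (pm (lam0 + (μ : ι → ℝ))) : ℂ) * ((starRingEnd ℂ) v)‖
        ≤ Real.pi * |B (pp (lam0 + (μ : ι → ℝ))) (pp (lam0 + (μ : ι → ℝ)))| * ‖v‖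
          + Real.pi * |B (pm (lam0 + (μ : ι → ℝ))) (pm (lam0 + (μ : ι → ℝ)))| * ‖v‖ := by
          refine le_trans (norm_add_le _ _) ?_
          rw [e1, e2]
      _ ≤ Real.pi * M * (Cp ^ 2 + Cm ^ 2) * (1 + ‖lam0 + (μ : ι → ℝ)‖) ^ 2 * ‖v‖ := by
          have h5 : Real.pi * |B (pp (lam0 + (μ : ι → ℝ))) (pp (lam0 + (μ : ι → ℝ)))|
              + Real.pi * |B (pm (lam0 + (μ : ι → ℝ))) (pm (lam0 + (μ : ι → ℝ)))|
              ≤ Real.pi * M * (Cp ^ 2 + Cm ^ 2) * (1 + ‖lam0 + (μ : ι → ℝ)‖) ^ 2 := by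
            have h6 := mul_le_mul_of_nonneg_left hx2 (by positivity : (0:ℝ) ≤ M * Cp ^ 2)
            have h7 := mul_le_mul_of_nonneg_left hx2 (by positivity : (0:ℝ) ≤ M * Cm ^ 2)
            nlinarith [mul_le_mul_of_nonneg_left hA hpi.le,
              mul_le_mul_of_nonneg_left hBm hpi.le,
              mul_le_mul_of_nonneg_left h6 hpi.le,
              mul_le_mul_of_nonneg_left h7 hpi.le]
          nlinarith [mul_le_mul_of_nonneg_right h5 (norm_nonneg v)]
  -- half plane facts
  have hy2 : 0 < τ.im / 2 := by linarith
  have hballim : ∀ τ' ∈ Metric.ball τ (τ.im / 2), τ.im / 2 ≤ τ'.im := by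
    intro τ' hτ'
    have h1 : ‖τ' - τ‖ < τ.im / 2 := by
      rw [← dist_eq_norm]
      exact Metric.mem_ball.1 hτ'
    have h2 : |(τ' - τ).im| ≤ ‖τ' - τ‖ := Complex.abs_im_le_norm _
    rw [Complex.sub_im] at h2
    have h3 := abs_le.1 (le_trans h2 h1.le)
    linarith [h3.1]
  -- per-term bound on derivative
  have hbound1 : ∀ (μ : L) (τ' : ℂ), τ.im / 2 ≤ τ'.im →
      ‖P μ * termF B pp pm L lam0 μ τ' ζ‖
        ≤ CP * ((1 + ‖lam0 + (μ : ι → ℝ)‖) ^ k *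
            Real.exp (-(Real.pi * (τ.im / 2) *
                (B (pp (lam0 + (μ : ι → ℝ))) (pp (lam0 + (μ : ι → ℝ)))
                  - B (pm (lam0 + (μ : ι → ℝ))) (pm (lam0 + (μ : ι → ℝ)))))
              + 2 * Real.pi * M * ‖imV ζ‖ * ‖lam0 + (μ : ι → ℝ)‖)) := by
    intro μ τ' hτ'
    calc ‖P μ * termF B pp pm L lam0 μ τ' ζ‖
        = ‖P μ‖ * ‖termF B pp pm L lam0 μ τ' ζ‖ := norm_mul _ _
      _ ≤ (CP * (1 + ‖lam0 + (μ : ι → ℝ)‖) ^ k) *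
          Real.exp (-(Real.pi * (τ.im / 2) *
              (B (pp (lam0 + (μ : ι → ℝ))) (pp (lam0 + (μ : ι → ℝ)))
                - B (pm (lam0 + (μ : ι → ℝ))) (pm (lam0 + (μ : ι → ℝ)))))
            + 2 * Real.pi * M * ‖imV ζ‖ * ‖lam0 + (μ : ι → ℝ)‖) :=
          mul_le_mul (hP μ) (norm_termF_le hB hG hM hM0 lam0 μ hy2 hτ' ζ le_rfl)
            (norm_nonneg _) (by positivity)
      _ = _ := by ring
  have hbound2 : ∀ (μ : L) (τ' : ℂ), τ.im / 2 ≤ τ'.im →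
      ‖(P μ * termF B pp pm L lam0 μ τ' ζ) • gCLM B pp pm L lam0 μ‖
        ≤ (CP * (Real.pi * M * (Cp ^ 2 + Cm ^ 2))) * ((1 + ‖lam0 + (μ : ι → ℝ)‖) ^ (k + 2) *
            Real.exp (-(Real.pi * (τ.im / 2) *
                (B (pp (lam0 + (μ : ι → ℝ))) (pp (lam0 + (μ : ι → ℝ)))
                  - B (pm (lam0 + (μ : ι → ℝ))) (pm (lam0 + (μ : ι → ℝ)))))
              + 2 * Real.pi * M * ‖imV ζ‖ * ‖lam0 + (μ : ι → ℝ)‖)) := by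
    intro μ τ' hτ'
    calc ‖(P μ * termF B pp pm L lam0 μ τ' ζ) • gCLM B pp pm L lam0 μ‖
        ≤ ‖P μ * termF B pp pm L lam0 μ τ' ζ‖ * ‖gCLM B pp pm L lam0 μ‖ :=
          ContinuousLinearMap.opNorm_smul_le _ _
      _ ≤ (CP * ((1 + ‖lam0 + (μ : ι → ℝ)‖) ^ k *
            Real.exp (-(Real.pi * (τ.im / 2) *
                (B (pp (lam0 + (μ : ι → ℝ))) (pp (lam0 + (μ : ι → ℝ)))
                  - B (pm (lam0 + (μ : ι → ℝ))) (pm (lam0 + (μ : ι → ℝ)))))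
              + 2 * Real.pi * M * ‖imV ζ‖ * ‖lam0 + (μ : ι → ℝ)‖))) *
          (Real.pi * M * (Cp ^ 2 + Cm ^ 2) * (1 + ‖lam0 + (μ : ι → ℝ)‖) ^ 2) :=
          mul_le_mul (hbound1 μ τ' hτ') (hgb μ) (norm_nonneg _) (by positivity)
      _ = _ := by
          rw [show k + 2 = k + 1 + 1 by rfl, pow_succ, pow_succ]
          ring
  have hsumU : Summable fun μ : L =>
      (CP * (Real.pi * M * (Cp ^ 2 + Cm ^ 2))) * ((1 + ‖lam0 + (μ : ι → ℝ)‖) ^ (k + 2) *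
        Real.exp (-(Real.pi * (τ.im / 2) *
            (B (pp (lam0 + (μ : ι → ℝ))) (pp (lam0 + (μ : ι → ℝ)))
              - B (pm (lam0 + (μ : ι → ℝ))) (pm (lam0 + (μ : ι → ℝ)))))
          + 2 * Real.pi * M * ‖imV ζ‖ * ‖lam0 + (μ : ι → ℝ)‖)) :=
    (summable_key hB hG hL lam0 (k + 2) (mul_pos hpi hy2)
      (2 * Real.pi * M * ‖imV ζ‖)).mul_left _
  have hsumD : Summable fun μ : L =>
      (P μ * termF B pp pm L lam0 μ τ ζ) • gCLM B pp pm L lam0 μ :=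
    Summable.of_norm_bounded hsumU (fun μ => hbound2 μ τ (by linarith))
  -- summability of the series at τ
  obtain ⟨hsum, _, _⟩ := zMain hB hG hL lam0 hτ P CP k hP
  -- per-term derivative in τ'
  have hterm : ∀ (μ : L) (τ' : ℂ),
      HasFDerivAt (fun τ'' : ℂ => P μ * termF B pp pm L lam0 μ τ'' ζ)
        ((P μ * termF B pp pm L lam0 μ τ' ζ) • gCLM B pp pm L lam0 μ) τ' := by
    intro μ τ'
    set G : ℂ →L[ℝ] ℂ := gCLM B pp pm L lam0 μ with hGd
    set c : ℂ := 2 * (Real.pi : ℂ) * Complex.I * pairC B (lam0 + (μ : ι → ℝ)) ζ with hcd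
    have hfun : ∀ τ'' : ℂ, termF B pp pm L lam0 μ τ'' ζ = Complex.exp (G τ'' + c) := by
      intro τ''
      rw [termF, eC, hGd, gCLM_apply, hcd]
      congr 1
      ring
    have h1 : HasFDerivAt (fun τ'' : ℂ => G τ'' + c) G τ' := (G.hasFDerivAt).add_const c
    have h2 := (h1.cexp).const_mul (P μ)
    have h3 : (fun τ'' : ℂ => P μ * termF B pp pm L lam0 μ τ'' ζ)
        = fun τ'' : ℂ => P μ * Complex.exp (G τ'' + c) := by
      funext τ''
      rw [hfun]
    rw [h3]
    refine h2.congr_fderiv ?_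
    rw [hfun τ']
    exact smul_smul _ _ _
  refine ⟨hsumD, ?_⟩
  exact hasFDerivAt_tsum_of_isPreconnected hsumU Metric.isOpen_ball
    (convex_ball τ (τ.im / 2)).isPreconnected
    (fun μ τ' _ => hterm μ τ')
    (fun μ τ' hτ' => hbound2 μ τ' (hballim τ' hτ'))
    (Metric.mem_ball_self hy2) (hsum ζ) (Metric.mem_ball_self hy2)

lemma dual_sum_eq (hB : IsSymmBilin B) {n : ℕ} (ws wds : Fin n → (ι → ℝ))
    (l u v : ι → ℝ) (hl : l = u + v)
    (hu : u ∈ Submodule.span ℝ (Set.range ws))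
    (hKron : ∀ i j, B (ws i) (wds j) = if i = j then (1:ℝ) else 0)
    (hvws : ∀ i, B v (ws i) = 0) (hvwds : ∀ i, B v (wds i) = 0) :
    ∑ i, B l (ws i) * B l (wds i) = B u u := by
  classical
  obtain ⟨c, hc⟩ := (Submodule.mem_span_range_iff_exists_fun ℝ).1 hu
  have hBl_ws : ∀ i, B l (ws i) = B u (ws i) := by
    intro i
    rw [hl, hB.1, hvws, add_zero]
  have hBl_wds : ∀ i, B l (wds i) = B u (wds i) := by
    intro i
    rw [hl, hB.1, hvwds, add_zero]
  have hBu_wds : ∀ i, B u (wds i) = c i := by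
    intro i
    rw [← hc, B_suml hB]
    have h1 : ∀ j, B (c j • ws j) (wds i) = c j * B (ws j) (wds i) := fun j => hB.2.1 _ _ _
    rw [Finset.sum_congr rfl fun j _ => h1 j]
    rw [Finset.sum_congr rfl fun j _ => by rw [hKron j i]]
    simp
  have hfin : ∑ i, B u (ws i) * c i = B u u := by
    have h2 : B u (∑ i, c i • ws i) = ∑ i, c i * B u (ws i) := by
      rw [B_sumr hB]
      exact Finset.sum_congr rfl fun i _ => B_smulr hB _ _ _
    rw [← hc] at *
    rw [h2]
    exact Finset.sum_congr rfl fun i _ => mul_comm _ _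
  calc ∑ i, B l (ws i) * B l (wds i) = ∑ i, B u (ws i) * c i :=
      Finset.sum_congr rfl fun i _ => by rw [hBl_ws, hBl_wds, hBu_wds]
    _ = B u u := hfin

lemma dual_sum_pp (hB : IsSymmBilin B) (hG : IsGrass B pp pm) {n : ℕ}
    (ws wds : Fin n → (ι → ℝ)) (hw : IsDualBasisOf B pp ws wds) (l : ι → ℝ) :
    ∑ i, B l (ws i) * B l (wds i) = B (pp l) (pp l) := by
  refine dual_sum_eq hB ws wds l (pp l) (pm l) (hG.2.2.2.2.1 l).symm ?_ hw.2.2.2.2 ?_ ?_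
  · rw [hw.2.2.2.1]
    exact Submodule.subset_span ⟨l, rfl⟩
  · intro i
    rw [hB.2.2]
    have h1 : ws i = pp (ws i) := (hw.1 i).symm
    rw [h1]
    exact hG.2.2.2.2.2.2.2.1 (ws i) l
  · intro i
    rw [hB.2.2]
    have h1 : wds i = pp (wds i) := (hw.2.1 i).symm
    rw [h1]
    exact hG.2.2.2.2.2.2.2.1 (wds i) l

lemma dual_sum_pm (hB : IsSymmBilin B) (hG : IsGrass B pp pm) {n : ℕ}
    (ws wds : Fin n → (ι → ℝ)) (hw : IsDualBasisOf B pm ws wds) (l : ι → ℝ) :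
    ∑ i, B l (ws i) * B l (wds i) = B (pm l) (pm l) := by
  refine dual_sum_eq hB ws wds l (pm l) (pp l) ?_ ?_ hw.2.2.2.2 ?_ ?_
  · rw [add_comm (pm l) (pp l)]
    exact (hG.2.2.2.2.1 l).symm
  · rw [hw.2.2.2.1]
    exact Submodule.subset_span ⟨l, rfl⟩
  · intro i
    have h1 : ws i = pm (ws i) := (hw.1 i).symm
    rw [h1]
    exact hG.2.2.2.2.2.2.2.1 l (ws i)
  · intro i
    have h1 : wds i = pm (wds i) := (hw.2.1 i).symm
    rw [h1]
    exact hG.2.2.2.2.2.2.2.1 l (wds i)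

end DerivZ

end AuxAll

/-- Proposition difeq: the Jacobi–Siegel theta component is
holomorphic in `ζ`, differentiable in `τ`, and satisfies the two heat equations
`4πi ∂_τ θ = Δ^h_{v₊} θ` and `4πi ∂_{τ̄} θ = Δ^h_{v₋} θ`, for any choice of basis
and `B`-dual basis of `v₊` and of `v₋`. -/
theorem statement_3 (B : (ι → ℝ) → (ι → ℝ) → ℝ) (pp pm : (ι → ℝ) → (ι → ℝ))
    (L : Submodule ℤ (ι → ℝ))
    (hB : IsSymmBilin B) (hBnd : Nondeg B) (hG : IsGrass B pp pm)
    (hL : IsFullLattice L) (hE : IsEvenLat B L)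
    (lam0 : ι → ℝ) (hlam0 : lam0 ∈ dualSet B L)
    (bp bm : ℕ) (wp wpd : Fin bp → (ι → ℝ)) (wm wmd : Fin bm → (ι → ℝ))
    (hwp : IsDualBasisOf B pp wp wpd) (hwm : IsDualBasisOf B pm wm wmd)
    (τ : ℂ) (hτ : 0 < τ.im) :
    Differentiable ℂ (fun ζ : ι → ℂ => theta B pp pm L lam0 τ ζ) ∧
    (∀ ζ : ι → ℂ, DifferentiableAt ℝ (fun τ' => theta B pp pm L lam0 τ' ζ) τ) ∧
    (∀ w : ι → ℝ,
      Differentiable ℂ (fun ζ : ι → ℂ => dirDeriv w (theta B pp pm L lam0 τ) ζ)) ∧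
    (∀ ζ : ι → ℂ,
      4 * (Real.pi : ℂ) * Complex.I * wirtD (fun τ' => theta B pp pm L lam0 τ' ζ) τ
        = lapl wp wpd (theta B pp pm L lam0 τ) ζ) ∧
    (∀ ζ : ι → ℂ,
      4 * (Real.pi : ℂ) * Complex.I
          * wirtDBar (fun τ' => theta B pp pm L lam0 τ' ζ) τ
        = lapl wm wmd (theta B pp pm L lam0 τ) ζ) := by
  classical
  obtain ⟨M, hMp, hM⟩ := exists_MB hB
  have hM0 : (0:ℝ) ≤ M := hMp.le
  have hpi := Real.pi_pos
  -- coefficient bounds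
  have hP1 : ∀ μ : L, ‖(1:ℂ)‖ ≤ 1 * (1 + ‖lam0 + (μ : ι → ℝ)‖) ^ 0 := fun μ => by simp
  have hnrm2pi : ‖2 * (Real.pi : ℂ) * Complex.I‖ = 2 * Real.pi := by
    simp [norm_mul, Complex.norm_real, Real.norm_eq_abs, abs_of_pos hpi]
  have hcoef : ∀ (w : ι → ℝ) (μ : L),
      ‖2 * (Real.pi : ℂ) * Complex.I * ((B (lam0 + (μ : ι → ℝ)) w : ℝ) : ℂ)‖
        ≤ (2 * Real.pi * M * ‖w‖) * (1 + ‖lam0 + (μ : ι → ℝ)‖) := by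
    intro w μ
    rw [norm_mul, hnrm2pi, Complex.norm_real, Real.norm_eq_abs]
    have h1 := hM (lam0 + (μ : ι → ℝ)) w
    have h2 : ‖lam0 + (μ : ι → ℝ)‖ ≤ 1 + ‖lam0 + (μ : ι → ℝ)‖ := by
      linarith [norm_nonneg (lam0 + (μ : ι → ℝ))]
    nlinarith [abs_nonneg (B (lam0 + (μ : ι → ℝ)) w), norm_nonneg w,
      norm_nonneg (lam0 + (μ : ι → ℝ)), mul_le_mul_of_nonneg_left h2
        (by positivity : (0:ℝ) ≤ 2 * Real.pi * M * ‖w‖)]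
  have hPw : ∀ (w : ι → ℝ) (μ : L),
      ‖(1:ℂ) * (2 * (Real.pi : ℂ) * Complex.I * ((B (lam0 + (μ : ι → ℝ)) w : ℝ) : ℂ))‖
        ≤ (2 * Real.pi * M * ‖w‖) * (1 + ‖lam0 + (μ : ι → ℝ)‖) ^ 1 := by
    intro w μ
    rw [one_mul, pow_one]
    exact hcoef w μ
  have hPww : ∀ (w w' : ι → ℝ) (μ : L),
      ‖((1:ℂ) * (2 * (Real.pi : ℂ) * Complex.I * ((B (lam0 + (μ : ι → ℝ)) w : ℝ) : ℂ)))
          * (2 * (Real.pi : ℂ) * Complex.I * ((B (lam0 + (μ : ι → ℝ)) w' : ℝ) : ℂ))‖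
        ≤ ((2 * Real.pi * M * ‖w‖) * (2 * Real.pi * M * ‖w'‖))
            * (1 + ‖lam0 + (μ : ι → ℝ)‖) ^ 2 := by
    intro w w' μ
    rw [norm_mul]
    have h1 := hPw w μ
    have h2 := hcoef w' μ
    have h3 : (0:ℝ) ≤ 1 + ‖lam0 + (μ : ι → ℝ)‖ := by positivity
    calc ‖(1:ℂ) * (2 * (Real.pi : ℂ) * Complex.I * ((B (lam0 + (μ : ι → ℝ)) w : ℝ) : ℂ))‖
          * ‖2 * (Real.pi : ℂ) * Complex.I * ((B (lam0 + (μ : ι → ℝ)) w' : ℝ) : ℂ)‖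
        ≤ ((2 * Real.pi * M * ‖w‖) * (1 + ‖lam0 + (μ : ι → ℝ)‖) ^ 1)
          * ((2 * Real.pi * M * ‖w'‖) * (1 + ‖lam0 + (μ : ι → ℝ)‖)) :=
          mul_le_mul h1 h2 (norm_nonneg _) (by positivity)
      _ = ((2 * Real.pi * M * ‖w‖) * (2 * Real.pi * M * ‖w'‖))
            * (1 + ‖lam0 + (μ : ι → ℝ)‖) ^ 2 := by ring
  -- main objects
  obtain ⟨hsum1, hsumD1, hder1⟩ := zMain hB hG hL lam0 hτ (fun _ => (1:ℂ)) 1 0 hP1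
  have hthetafun : theta B pp pm L lam0 τ
      = fun ζ : ι → ℂ => ∑' μ : L, (1:ℂ) * termF B pp pm L lam0 μ τ ζ :=
    funext fun ζ => by
      rw [theta_eq]
      exact tsum_congr fun μ => (one_mul _).symm
  refine ⟨?_, ?_, ?_, ?_, ?_⟩
  -- 1 : holomorphy in ζ
  · have h1 : (fun ζ : ι → ℂ => theta B pp pm L lam0 τ ζ)
        = fun ζ : ι → ℂ => ∑' μ : L, (1:ℂ) * termF B pp pm L lam0 μ τ ζ := by
      funext ζ
      rw [theta_eq]
      exact tsum_congr fun μ => (one_mul _).symm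
    rw [h1]
    exact fun ζ => (hder1 ζ).differentiableAt
  -- 2 : differentiability in τ
  · intro ζ
    have h1 : (fun τ' : ℂ => theta B pp pm L lam0 τ' ζ)
        = fun τ' : ℂ => ∑' μ : L, (1:ℂ) * termF B pp pm L lam0 μ τ' ζ := by
      funext τ'
      rw [theta_eq]
      exact tsum_congr fun μ => (one_mul _).symm
    rw [h1]
    exact (tMain hB hG hL lam0 hτ (fun _ => (1:ℂ)) 1 0 hP1 ζ).2.differentiableAt
  -- 3 : holomorphy of directional derivatives
  · intro w
    have h1 : (fun ζ : ι → ℂ => dirDeriv w (theta B pp pm L lam0 τ) ζ)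
        = fun ζ : ι → ℂ => ∑' μ : L,
            ((1:ℂ) * (2 * (Real.pi : ℂ) * Complex.I * ((B (lam0 + (μ : ι → ℝ)) w : ℝ) : ℂ)))
              * termF B pp pm L lam0 μ τ ζ := by
      funext ζ
      rw [hthetafun]
      exact dirDeriv_tsum hB hG hL lam0 hτ (fun _ => (1:ℂ)) 1 0 hP1 w ζ
    rw [h1]
    exact fun ζ =>
      ((zMain hB hG hL lam0 hτ _ (2 * Real.pi * M * ‖w‖) 1 (hPw w)).2.2 ζ).differentiableAt
  -- 4 : heat equation for the plus part
  · intro ζ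
    obtain ⟨hsumG, hderT⟩ := tMain hB hG hL lam0 hτ (fun _ => (1:ℂ)) 1 0 hP1 ζ
    have hfe : (fun τ' : ℂ => theta B pp pm L lam0 τ' ζ)
        = fun τ' : ℂ => ∑' μ : L, (1:ℂ) * termF B pp pm L lam0 μ τ' ζ := by
      funext τ'
      rw [theta_eq]
      exact tsum_congr fun μ => (one_mul _).symm
    rw [hfe]
    simp only [wirtD]
    rw [hderT.fderiv]
    have happly : ∀ v : ℂ,
        (∑' μ : L, ((1:ℂ) * termF B pp pm L lam0 μ τ ζ) • gCLM B pp pm L lam0 μ) v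
          = ∑' μ : L, (((1:ℂ) * termF B pp pm L lam0 μ τ ζ) • gCLM B pp pm L lam0 μ) v := by
      intro v
      have heq : (∑' μ : L, ((1:ℂ) * termF B pp pm L lam0 μ τ ζ) • gCLM B pp pm L lam0 μ) v
          = (ContinuousLinearMap.apply ℝ ℂ v)
            (∑' μ : L, ((1:ℂ) * termF B pp pm L lam0 μ τ ζ) • gCLM B pp pm L lam0 μ) := rfl
      rw [heq, (ContinuousLinearMap.apply ℝ ℂ v).map_tsum hsumG]
      rfl
    have hs1 : Summable fun μ : L =>
        (((1:ℂ) * termF B pp pm L lam0 μ τ ζ) • gCLM B pp pm L lam0 μ) (1:ℂ) :=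
      (hsumG.mapL (ContinuousLinearMap.apply ℝ ℂ (1:ℂ))).congr fun μ => rfl
    have hsI : Summable fun μ : L =>
        (((1:ℂ) * termF B pp pm L lam0 μ τ ζ) • gCLM B pp pm L lam0 μ) Complex.I :=
      (hsumG.mapL (ContinuousLinearMap.apply ℝ ℂ Complex.I)).congr fun μ => rfl
    have hvapp : ∀ (μ : L) (v : ℂ),
        (((1:ℂ) * termF B pp pm L lam0 μ τ ζ) • gCLM B pp pm L lam0 μ) v
          = termF B pp pm L lam0 μ τ ζ *
            ((Real.pi : ℂ) * Complex.I * ((B (pp (lam0 + (μ : ι → ℝ))) (pp (lam0 + (μ : ι → ℝ))) : ℝ) : ℂ) * v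
              + (Real.pi : ℂ) * Complex.I * ((B (pm (lam0 + (μ : ι → ℝ))) (pm (lam0 + (μ : ι → ℝ))) : ℝ) : ℂ) * ((starRingEnd ℂ) v)) := by
      intro μ v
      rw [ContinuousLinearMap.smul_apply, gCLM_apply]
      rw [smul_eq_mul]
      ring
    rw [happly 1, happly Complex.I]
    rw [← tsum_mul_left, ← Summable.tsum_sub hs1 (hsI.mul_left Complex.I),
      ← tsum_div_const, ← tsum_mul_left]
    -- right hand side
    have hinner : ∀ i : Fin bp,
        (fun ζ' : ι → ℂ => dirDeriv (wpd i) (theta B pp pm L lam0 τ) ζ')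
        = fun ζ' : ι → ℂ => ∑' μ : L,
            ((1:ℂ) * (2 * (Real.pi:ℂ) * Complex.I * ((B (lam0 + (μ:ι→ℝ)) (wpd i) : ℝ):ℂ)))
              * termF B pp pm L lam0 μ τ ζ' := by
      intro i
      funext ζ'
      rw [hthetafun]
      exact dirDeriv_tsum hB hG hL lam0 hτ (fun _ => (1:ℂ)) 1 0 hP1 (wpd i) ζ'
    have hlapl : lapl wp wpd (theta B pp pm L lam0 τ) ζ
        = ∑ i : Fin bp, ∑' μ : L,
            (((1:ℂ) * (2 * (Real.pi:ℂ) * Complex.I * ((B (lam0 + (μ:ι→ℝ)) (wpd i) : ℝ):ℂ)))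
              * (2 * (Real.pi:ℂ) * Complex.I * ((B (lam0 + (μ:ι→ℝ)) (wp i) : ℝ):ℂ)))
              * termF B pp pm L lam0 μ τ ζ := by
      simp only [lapl]
      refine Finset.sum_congr rfl fun i _ => ?_
      rw [hinner i]
      exact dirDeriv_tsum hB hG hL lam0 hτ
        (fun μ => (1:ℂ) * (2 * (Real.pi:ℂ) * Complex.I * ((B (lam0 + (μ:ι→ℝ)) (wpd i) : ℝ):ℂ)))
        (2 * Real.pi * M * ‖wpd i‖) 1 (hPw (wpd i)) (wp i) ζ
    rw [hlapl]
    have hsum_i : ∀ i : Fin bp, Summable fun μ : L =>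
        (((1:ℂ) * (2 * (Real.pi:ℂ) * Complex.I * ((B (lam0 + (μ:ι→ℝ)) (wpd i) : ℝ):ℂ)))
          * (2 * (Real.pi:ℂ) * Complex.I * ((B (lam0 + (μ:ι→ℝ)) (wp i) : ℝ):ℂ)))
          * termF B pp pm L lam0 μ τ ζ :=
      fun i => (zMain hB hG hL lam0 hτ _
        ((2 * Real.pi * M * ‖wpd i‖) * (2 * Real.pi * M * ‖wp i‖)) 2
        (hPww (wpd i) (wp i))).1 ζ
    rw [← Summable.tsum_finsetSum (fun i _ => hsum_i i)]
    refine tsum_congr fun μ => ?_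
    have hsumB := dual_sum_pp hB hG wp wpd hwp (lam0 + (μ : ι → ℝ))
    have hcast : ∑ i : Fin bp,
        ((B (lam0 + (μ:ι→ℝ)) (wp i) : ℝ):ℂ) * ((B (lam0 + (μ:ι→ℝ)) (wpd i) : ℝ):ℂ)
        = ((B (pp (lam0 + (μ:ι→ℝ))) (pp (lam0 + (μ:ι→ℝ))) : ℝ) : ℂ) := by
      rw [← hsumB]
      push_cast
      rfl
    have hexp : ∑ i : Fin bp,
        (((1:ℂ) * (2 * (Real.pi:ℂ) * Complex.I * ((B (lam0 + (μ:ι→ℝ)) (wpd i) : ℝ):ℂ)))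
          * (2 * (Real.pi:ℂ) * Complex.I * ((B (lam0 + (μ:ι→ℝ)) (wp i) : ℝ):ℂ)))
          * termF B pp pm L lam0 μ τ ζ
        = (2 * (Real.pi:ℂ) * Complex.I) ^ 2
            * ((B (pp (lam0 + (μ:ι→ℝ))) (pp (lam0 + (μ:ι→ℝ))) : ℝ) : ℂ)
            * termF B pp pm L lam0 μ τ ζ := by
      rw [← Finset.sum_mul]
      rw [show ∑ i : Fin bp,
          ((1:ℂ) * (2 * (Real.pi:ℂ) * Complex.I * ((B (lam0 + (μ:ι→ℝ)) (wpd i) : ℝ):ℂ)))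
            * (2 * (Real.pi:ℂ) * Complex.I * ((B (lam0 + (μ:ι→ℝ)) (wp i) : ℝ):ℂ))
          = (2 * (Real.pi:ℂ) * Complex.I) ^ 2 * ∑ i : Fin bp,
            ((B (lam0 + (μ:ι→ℝ)) (wp i) : ℝ):ℂ) * ((B (lam0 + (μ:ι→ℝ)) (wpd i) : ℝ):ℂ) by
        rw [Finset.mul_sum]
        exact Finset.sum_congr rfl fun i _ => by ring]
      rw [hcast]
    rw [hexp, hvapp μ 1, hvapp μ Complex.I]
    simp only [map_one, Complex.conj_I]
    have hI := Complex.I_sq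
    linear_combination ((-2) * (Real.pi:ℂ) ^ 2 * termF B pp pm L lam0 μ τ ζ
      * (((B (pp (lam0 + (μ : ι → ℝ))) (pp (lam0 + (μ : ι → ℝ))) : ℝ) : ℂ) - ((B (pm (lam0 + (μ : ι → ℝ))) (pm (lam0 + (μ : ι → ℝ))) : ℝ) : ℂ)) * Complex.I ^ 2) * hI
  -- 5 : heat equation for the minus part
  · intro ζ
    obtain ⟨hsumG, hderT⟩ := tMain hB hG hL lam0 hτ (fun _ => (1:ℂ)) 1 0 hP1 ζ
    have hfe : (fun τ' : ℂ => theta B pp pm L lam0 τ' ζ)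
        = fun τ' : ℂ => ∑' μ : L, (1:ℂ) * termF B pp pm L lam0 μ τ' ζ := by
      funext τ'
      rw [theta_eq]
      exact tsum_congr fun μ => (one_mul _).symm
    rw [hfe]
    simp only [wirtDBar]
    rw [hderT.fderiv]
    have happly : ∀ v : ℂ,
        (∑' μ : L, ((1:ℂ) * termF B pp pm L lam0 μ τ ζ) • gCLM B pp pm L lam0 μ) v
          = ∑' μ : L, (((1:ℂ) * termF B pp pm L lam0 μ τ ζ) • gCLM B pp pm L lam0 μ) v := by
      intro v
      have heq : (∑' μ : L, ((1:ℂ) * termF B pp pm L lam0 μ τ ζ) • gCLM B pp pm L lam0 μ) v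
          = (ContinuousLinearMap.apply ℝ ℂ v)
            (∑' μ : L, ((1:ℂ) * termF B pp pm L lam0 μ τ ζ) • gCLM B pp pm L lam0 μ) := rfl
      rw [heq, (ContinuousLinearMap.apply ℝ ℂ v).map_tsum hsumG]
      rfl
    have hs1 : Summable fun μ : L =>
        (((1:ℂ) * termF B pp pm L lam0 μ τ ζ) • gCLM B pp pm L lam0 μ) (1:ℂ) :=
      (hsumG.mapL (ContinuousLinearMap.apply ℝ ℂ (1:ℂ))).congr fun μ => rfl
    have hsI : Summable fun μ : L =>
        (((1:ℂ) * termF B pp pm L lam0 μ τ ζ) • gCLM B pp pm L lam0 μ) Complex.I :=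
      (hsumG.mapL (ContinuousLinearMap.apply ℝ ℂ Complex.I)).congr fun μ => rfl
    have hvapp : ∀ (μ : L) (v : ℂ),
        (((1:ℂ) * termF B pp pm L lam0 μ τ ζ) • gCLM B pp pm L lam0 μ) v
          = termF B pp pm L lam0 μ τ ζ *
            ((Real.pi : ℂ) * Complex.I * ((B (pp (lam0 + (μ : ι → ℝ))) (pp (lam0 + (μ : ι → ℝ))) : ℝ) : ℂ) * v
              + (Real.pi : ℂ) * Complex.I * ((B (pm (lam0 + (μ : ι → ℝ))) (pm (lam0 + (μ : ι → ℝ))) : ℝ) : ℂ) * ((starRingEnd ℂ) v)) := by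
      intro μ v
      rw [ContinuousLinearMap.smul_apply, gCLM_apply]
      rw [smul_eq_mul]
      ring
    rw [happly 1, happly Complex.I]
    rw [← tsum_mul_left, ← Summable.tsum_add hs1 (hsI.mul_left Complex.I),
      ← tsum_div_const, ← tsum_mul_left]
    -- right hand side
    have hinner : ∀ i : Fin bm,
        (fun ζ' : ι → ℂ => dirDeriv (wmd i) (theta B pp pm L lam0 τ) ζ')
        = fun ζ' : ι → ℂ => ∑' μ : L,
            ((1:ℂ) * (2 * (Real.pi:ℂ) * Complex.I * ((B (lam0 + (μ:ι→ℝ)) (wmd i) : ℝ):ℂ)))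
              * termF B pp pm L lam0 μ τ ζ' := by
      intro i
      funext ζ'
      rw [hthetafun]
      exact dirDeriv_tsum hB hG hL lam0 hτ (fun _ => (1:ℂ)) 1 0 hP1 (wmd i) ζ'
    have hlapl : lapl wm wmd (theta B pp pm L lam0 τ) ζ
        = ∑ i : Fin bm, ∑' μ : L,
            (((1:ℂ) * (2 * (Real.pi:ℂ) * Complex.I * ((B (lam0 + (μ:ι→ℝ)) (wmd i) : ℝ):ℂ)))
              * (2 * (Real.pi:ℂ) * Complex.I * ((B (lam0 + (μ:ι→ℝ)) (wm i) : ℝ):ℂ)))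
              * termF B pp pm L lam0 μ τ ζ := by
      simp only [lapl]
      refine Finset.sum_congr rfl fun i _ => ?_
      rw [hinner i]
      exact dirDeriv_tsum hB hG hL lam0 hτ
        (fun μ => (1:ℂ) * (2 * (Real.pi:ℂ) * Complex.I * ((B (lam0 + (μ:ι→ℝ)) (wmd i) : ℝ):ℂ)))
        (2 * Real.pi * M * ‖wmd i‖) 1 (hPw (wmd i)) (wm i) ζ
    rw [hlapl]
    have hsum_i : ∀ i : Fin bm, Summable fun μ : L =>
        (((1:ℂ) * (2 * (Real.pi:ℂ) * Complex.I * ((B (lam0 + (μ:ι→ℝ)) (wmd i) : ℝ):ℂ)))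
          * (2 * (Real.pi:ℂ) * Complex.I * ((B (lam0 + (μ:ι→ℝ)) (wm i) : ℝ):ℂ)))
          * termF B pp pm L lam0 μ τ ζ :=
      fun i => (zMain hB hG hL lam0 hτ _
        ((2 * Real.pi * M * ‖wmd i‖) * (2 * Real.pi * M * ‖wm i‖)) 2
        (hPww (wmd i) (wm i))).1 ζ
    rw [← Summable.tsum_finsetSum (fun i _ => hsum_i i)]
    refine tsum_congr fun μ => ?_
    have hsumB := dual_sum_pm hB hG wm wmd hwm (lam0 + (μ : ι → ℝ))
    have hcast : ∑ i : Fin bm,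
        ((B (lam0 + (μ:ι→ℝ)) (wm i) : ℝ):ℂ) * ((B (lam0 + (μ:ι→ℝ)) (wmd i) : ℝ):ℂ)
        = ((B (pm (lam0 + (μ:ι→ℝ))) (pm (lam0 + (μ:ι→ℝ))) : ℝ) : ℂ) := by
      rw [← hsumB]
      push_cast
      rfl
    have hexp : ∑ i : Fin bm,
        (((1:ℂ) * (2 * (Real.pi:ℂ) * Complex.I * ((B (lam0 + (μ:ι→ℝ)) (wmd i) : ℝ):ℂ)))
          * (2 * (Real.pi:ℂ) * Complex.I * ((B (lam0 + (μ:ι→ℝ)) (wm i) : ℝ):ℂ)))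
          * termF B pp pm L lam0 μ τ ζ
        = (2 * (Real.pi:ℂ) * Complex.I) ^ 2
            * ((B (pm (lam0 + (μ:ι→ℝ))) (pm (lam0 + (μ:ι→ℝ))) : ℝ) : ℂ)
            * termF B pp pm L lam0 μ τ ζ := by
      rw [← Finset.sum_mul]
      rw [show ∑ i : Fin bm,
          ((1:ℂ) * (2 * (Real.pi:ℂ) * Complex.I * ((B (lam0 + (μ:ι→ℝ)) (wmd i) : ℝ):ℂ)))
            * (2 * (Real.pi:ℂ) * Complex.I * ((B (lam0 + (μ:ι→ℝ)) (wm i) : ℝ):ℂ))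
          = (2 * (Real.pi:ℂ) * Complex.I) ^ 2 * ∑ i : Fin bm,
            ((B (lam0 + (μ:ι→ℝ)) (wm i) : ℝ):ℂ) * ((B (lam0 + (μ:ι→ℝ)) (wmd i) : ℝ):ℂ) by
        rw [Finset.mul_sum]
        exact Finset.sum_congr rfl fun i _ => by ring]
      rw [hcast]
    rw [hexp, hvapp μ 1, hvapp μ Complex.I]
    simp only [map_one, Complex.conj_I]
    have hI := Complex.I_sq
    linear_combination (2 * (Real.pi:ℂ) ^ 2 * termF B pp pm L lam0 μ τ ζ
      * (((B (pp (lam0 + (μ : ι → ℝ))) (pp (lam0 + (μ : ι → ℝ))) : ℝ) : ℂ) - ((B (pm (lam0 + (μ : ι → ℝ))) (pm (lam0 + (μ : ι → ℝ))) : ℝ) : ℂ)) * Complex.I ^ 2) * hI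


end JacobiIndef
end
end

section
/- (Theorem propgen, elliptic equation with characteristics) For all τ ∈ ℍ, ζ ∈ V_ℂ, λ₀ ∈ L*, α, β ∈ V and σ, ν ∈ L one has θ_{λ₀+L}(τ, ζ + τ·σ_{v₊} + conj(τ)·σ_{v₋} + ν; (α,β); v) = e(−τ·σ_{v₊}²/2 − conj(τ)·σ_{v₋}²/2 − B(σ, ζ) + B(ν, β) + B(σ, α))·θ_{λ₀+L}(τ, ζ; (α,β); v). -/
/-!
Common setup: Jacobi--Siegel theta functions of an even lattice `L` of indefinite
signature, with respect to a Grassmannian element `v = (v₊, v₋)`.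

We model the real quadratic space `V` concretely as `ι → ℝ` (`ι` finite), its
complexification `V_ℂ` as `ι → ℂ`, the bilinear form `B` as a plain function
(with bilinearity imposed as a hypothesis), the lattice `L` as a `ℤ`-submodule,
and the projections onto `v₊` and `v₋` as plain functions (with the projection
properties imposed as hypotheses).
-/

noncomputable section

namespace JacobiIndef

variable {ι : Type*} [Fintype ι]

/-!
Shifting `ζ` by `τσ₊ + τ̄σ₋` completes the square in each summand: the term of index `λ`
becomes, up to the factor `e(-τσ₊²/2 - τ̄σ₋²/2 - B(σ,ζ) + B(σ,α))`, the term of index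
`λ + σ`, and reindexing the sum over `L` by `μ ↦ μ + σ` absorbs this. The shift by `ν`
multiplies the term of index `λ` by `e(B(λ + β, ν)) = e(B(ν, β))`, because `B(λ, ν) ∈ ℤ`
for `λ ∈ L*` and `ν ∈ L`.
-/

lemma eC_add (a b : ℂ) : eC (a + b) = eC a * eC b := by
  rw [eC, eC, eC, ← Complex.exp_add]
  ring_nf

lemma eC_add_intCast (a : ℂ) (n : ℤ) : eC (a + n) = eC a := by
  rw [eC_add, eC.eq_def (n : ℂ),
    show 2 * (Real.pi : ℂ) * Complex.I * n = n * (2 * Real.pi * Complex.I) by ring,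
    Complex.exp_int_mul_two_pi_mul_I, mul_one]

section

omit [Fintype ι]

variable {B : (ι → ℝ) → (ι → ℝ) → ℝ}

lemma reV_cV (x : ι → ℝ) : reV (cV x) = x := by
  funext i
  simp [reV, cV]

lemma imV_cV (x : ι → ℝ) : imV (cV x) = 0 := by
  funext i
  simp [imV, cV]

lemma reV_add (z w : ι → ℂ) : reV (z + w) = reV z + reV w := by
  funext i
  simp [reV]

lemma imV_add (z w : ι → ℂ) : imV (z + w) = imV z + imV w := by
  funext i
  simp [imV]

lemma reV_smul_cV (c : ℂ) (x : ι → ℝ) : reV (c • cV x) = c.re • x := by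
  funext i
  simp [reV, cV]

lemma imV_smul_cV (c : ℂ) (x : ι → ℝ) : imV (c • cV x) = c.im • x := by
  funext i
  simp [imV, cV]

namespace IsSymmBilin

variable (hB : IsSymmBilin B)
include hB

lemma add_left (x y z : ι → ℝ) : B (x + y) z = B x z + B y z := hB.1 x y z

lemma symm (x y : ι → ℝ) : B x y = B y x := hB.2.2 x y

lemma add_right (x y z : ι → ℝ) : B x (y + z) = B x y + B x z := by
  rw [hB.symm, hB.add_left, hB.symm y, hB.symm z]

lemma smul_right (c : ℝ) (x y : ι → ℝ) : B x (c • y) = c * B x y := by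
  rw [hB.symm, hB.2.1, hB.symm y]

lemma zero_right (x : ι → ℝ) : B x 0 = 0 := by
  simpa using hB.smul_right 0 x 0

lemma add_add_self (x y : ι → ℝ) : B (x + y) (x + y) = B x x + 2 * B x y + B y y := by
  rw [hB.add_left, hB.add_right, hB.add_right, hB.symm y x]
  ring

lemma pairC_add_left (x y : ι → ℝ) (z : ι → ℂ) :
    pairC B (x + y) z = pairC B x z + pairC B y z := by
  simp only [pairC, hB.add_left]
  push_cast
  ring

lemma pairC_add_right (x : ι → ℝ) (z w : ι → ℂ) :
    pairC B x (z + w) = pairC B x z + pairC B x w := by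
  simp only [pairC, reV_add, imV_add, hB.add_right]
  push_cast
  ring

lemma pairC_cV (x y : ι → ℝ) : pairC B x (cV y) = B x y := by
  simp [pairC, reV_cV, imV_cV, hB.zero_right]

lemma pairC_smul_cV (c : ℂ) (x y : ι → ℝ) : pairC B x (c • cV y) = c * B x y := by
  simp only [pairC, reV_smul_cV, imV_smul_cV, hB.smul_right]
  push_cast
  linear_combination (B x y : ℂ) * Complex.re_add_im c

end IsSymmBilin

namespace IsGrass

variable {pp pm : (ι → ℝ) → (ι → ℝ)} (hG : IsGrass B pp pm)
include hG

lemma pp_add (x y : ι → ℝ) : pp (x + y) = pp x + pp y := hG.1 x y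

lemma pm_add (x y : ι → ℝ) : pm (x + y) = pm x + pm y := hG.2.2.1 x y

lemma pp_add_pm (x : ι → ℝ) : pp x + pm x = x := hG.2.2.2.2.1 x

lemma B_pp_pm (x y : ι → ℝ) : B (pp x) (pm y) = 0 := hG.2.2.2.2.2.2.2.1 x y

lemma B_pp_right (hB : IsSymmBilin B) (x y : ι → ℝ) : B x (pp y) = B (pp x) (pp y) := by
  conv_lhs => rw [← hG.pp_add_pm x, hB.add_left, hB.symm (pm x), hG.B_pp_pm y x]
  ring

lemma B_pm_right (hB : IsSymmBilin B) (x y : ι → ℝ) : B x (pm y) = B (pm x) (pm y) := by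
  conv_lhs => rw [← hG.pp_add_pm x, hB.add_left, hG.B_pp_pm x y]
  ring

lemma pairC_elliptic_shift (hB : IsSymmBilin B) (τ : ℂ)
    (x σ ν : ι → ℝ) (ζ : ι → ℂ) :
    pairC B x (ζ + τ • cV (pp σ) + (starRingEnd ℂ) τ • cV (pm σ) + cV ν)
      = pairC B x ζ + τ * B (pp x) (pp σ) + (starRingEnd ℂ) τ * B (pm x) (pm σ)
        + B x ν := by
  rw [hB.pairC_add_right, hB.pairC_add_right, hB.pairC_add_right, hB.pairC_smul_cV,
    hB.pairC_smul_cV, hB.pairC_cV, hG.B_pp_right hB, hG.B_pm_right hB]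

end IsGrass

def thetaCharTerm (B : (ι → ℝ) → (ι → ℝ) → ℝ) (pp pm : (ι → ℝ) → (ι → ℝ))
    (α β : ι → ℝ) (τ : ℂ) (ζ : ι → ℂ) (x : ι → ℝ) : ℂ :=
  eC (τ * (B (pp (x + β)) (pp (x + β)) : ℂ) / 2
    + (starRingEnd ℂ) τ * (B (pm (x + β)) (pm (x + β)) : ℂ) / 2
    + pairC B (x + β) ζ - (B (x + (2⁻¹ : ℝ) • β) α : ℂ))

lemma thetaChar_eq_tsum_thetaCharTerm (pp pm : (ι → ℝ) → (ι → ℝ))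
    (L : Submodule ℤ (ι → ℝ)) (lam0 α β : ι → ℝ) (τ : ℂ) (ζ : ι → ℂ) :
    thetaChar B pp pm L lam0 α β τ ζ
      = ∑' μ : L, thetaCharTerm B pp pm α β τ ζ (lam0 + μ) :=
  rfl

lemma thetaCharTerm_elliptic_shift {pp pm : (ι → ℝ) → (ι → ℝ)} (hB : IsSymmBilin B)
    (hG : IsGrass B pp pm) (α β : ι → ℝ) (τ : ℂ) (ζ : ι → ℂ) (x σ ν : ι → ℝ)
    (hxν : ∃ n : ℤ, B x ν = n) :
    thetaCharTerm B pp pm α β τ (ζ + τ • cV (pp σ) + (starRingEnd ℂ) τ • cV (pm σ) + cV ν) x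
      = eC (-(τ * (B (pp σ) (pp σ) : ℂ) / 2)
            - (starRingEnd ℂ) τ * (B (pm σ) (pm σ) : ℂ) / 2
            - pairC B σ ζ + (B ν β : ℂ) + (B σ α : ℂ))
          * thetaCharTerm B pp pm α β τ ζ (x + σ) := by
  obtain ⟨n, hn⟩ := hxν
  have hx : x + σ + β = (x + β) + σ := by abel
  have hxα : x + σ + (2⁻¹ : ℝ) • β = (x + (2⁻¹ : ℝ) • β) + σ := by abel
  rw [thetaCharTerm, thetaCharTerm, hx, hxα, hG.pp_add _ σ, hG.pm_add _ σ,
    hB.add_add_self (pp _), hB.add_add_self (pm _), hB.add_left _ σ α, hB.pairC_add_left _ σ,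
    hG.pairC_elliptic_shift hB, hB.add_left x β ν, hB.symm β ν, hn]
  refine (congrArg eC ?_).trans ((eC_add_intCast _ n).trans (eC_add _ _))
  push_cast
  ring

lemma exists_int_eq_pair_add_of_mem_dualSet {L : Submodule ℤ (ι → ℝ)} (hB : IsSymmBilin B)
    (hE : IsEvenLat B L) {lam0 : ι → ℝ} (hlam0 : lam0 ∈ dualSet B L) {μ ν : ι → ℝ}
    (hμ : μ ∈ L) (hν : ν ∈ L) : ∃ n : ℤ, B (lam0 + μ) ν = n := by
  obtain ⟨n₁, hn₁⟩ := hlam0 ν hν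
  obtain ⟨n₂, hn₂⟩ := hE.1 μ hμ ν hν
  exact ⟨n₁ + n₂, by rw [hB.add_left, hn₁, hn₂]; push_cast; ring⟩

end

theorem statement_16_general (B : (ι → ℝ) → (ι → ℝ) → ℝ) (pp pm : (ι → ℝ) → (ι → ℝ))
    (L : Submodule ℤ (ι → ℝ))
    (hB : IsSymmBilin B) (hG : IsGrass B pp pm)
    (hE : IsEvenLat B L)
    (τ : ℂ) (ζ : ι → ℂ)
    (lam0 : ι → ℝ) (hlam0 : lam0 ∈ dualSet B L) (α β : ι → ℝ)
    (σ : ι → ℝ) (hσ : σ ∈ L) (ν : ι → ℝ) (hν : ν ∈ L) :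
    thetaChar B pp pm L lam0 α β τ
        (ζ + τ • cV (pp σ) + (starRingEnd ℂ) τ • cV (pm σ) + cV ν)
      = eC (-(τ * (B (pp σ) (pp σ) : ℂ) / 2)
            - (starRingEnd ℂ) τ * (B (pm σ) (pm σ) : ℂ) / 2
            - pairC B σ ζ + (B ν β : ℂ) + (B σ α : ℂ))
          * thetaChar B pp pm L lam0 α β τ ζ := by
  have hshift (μ : L) := thetaCharTerm_elliptic_shift hB hG α β τ ζ (lam0 + μ) σ ν
    (exists_int_eq_pair_add_of_mem_dualSet hB hE hlam0 μ.2 hν)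
  rw [thetaChar_eq_tsum_thetaCharTerm, thetaChar_eq_tsum_thetaCharTerm, tsum_congr hshift,
    tsum_mul_left, ← (Equiv.addRight (⟨σ, hσ⟩ : L)).tsum_eq
      (fun μ : L => thetaCharTerm B pp pm α β τ ζ (lam0 + μ))]
  simp only [Equiv.coe_addRight, Submodule.coe_add, add_assoc]

/-- Theorem propgen, elliptic equation with characteristics:
the theta function with characteristics `(α,β)` satisfies
`θ(τ, ζ + τσ₊ + τ̄σ₋ + ν; (α,β); v) = e(-τσ₊²/2 - τ̄σ₋²/2 - B(σ,ζ) + B(ν,β) + B(σ,α))·θ(τ,ζ;(α,β);v)`. -/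
theorem statement_16 (B : (ι → ℝ) → (ι → ℝ) → ℝ) (pp pm : (ι → ℝ) → (ι → ℝ))
    (L : Submodule ℤ (ι → ℝ))
    (hB : IsSymmBilin B) (hBnd : Nondeg B) (hG : IsGrass B pp pm)
    (hL : IsFullLattice L) (hE : IsEvenLat B L)
    (τ : ℂ) (hτ : 0 < τ.im) (ζ : ι → ℂ)
    (lam0 : ι → ℝ) (hlam0 : lam0 ∈ dualSet B L) (α β : ι → ℝ)
    (σ : ι → ℝ) (hσ : σ ∈ L) (ν : ι → ℝ) (hν : ν ∈ L) :
    thetaChar B pp pm L lam0 α β τ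
        (ζ + τ • cV (pp σ) + (starRingEnd ℂ) τ • cV (pm σ) + cV ν)
      = eC (-(τ * (B (pp σ) (pp σ) : ℂ) / 2)
            - (starRingEnd ℂ) τ * (B (pm σ) (pm σ) : ℂ) / 2
            - pairC B σ ζ + (B ν β : ℂ) + (B σ α : ℂ))
          * thetaChar B pp pm L lam0 α β τ ζ :=
  statement_16_general B pp pm L hB hG hE τ ζ lam0 hlam0 α β σ hσ ν hν

end JacobiIndef
end
end
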